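/- arXiv:2408.15352 — 5 statements merged into one kernel-verified Lean document; each statement's English description precedes it below -/
import Mathlib

section
/- Let C : [0,1]² → [0,1] be a copula, let R_k = [a_k,b_k]×[c_k,d_k], k = 1,…,m, be rectangles with pairwise disjoint interiors whose union is [0,1]², and for each k let (P_k, Q_k) be an imprecise copula whose components P_k and Q_k are quasi-copulas. Let H_P be the patchwork of (P_1,…,P_m) along C and the rectangles R_k, and let H_Q be the patchwork of (Q_1,…,Q_m) along C and the rectangles R_k. Then (H_P, H_Q) is an imprecise copula. -/
open Set

/-- Volume of the rectangle `[x₁,x₂]×[y₁,y₂]` with respect to `Q`. -/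
def Vol (Q : ℝ → ℝ → ℝ) (x₁ x₂ y₁ y₂ : ℝ) : ℝ :=
  Q x₁ y₁ + Q x₂ y₂ - Q x₁ y₂ - Q x₂ y₁

/-- Boundary conditions on `[0,1]²`. -/
def Boundary (Q : ℝ → ℝ → ℝ) : Prop :=
  ∀ x ∈ Icc (0:ℝ) 1, Q x 0 = 0 ∧ Q 0 x = 0 ∧ Q x 1 = x ∧ Q 1 x = x

/-- A (bivariate) quasi-copula on `[0,1]²`, with values in `[0,1]`. -/
def QuasiCopula (Q : ℝ → ℝ → ℝ) : Prop :=
  Boundary Q ∧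
  (∀ x ∈ Icc (0:ℝ) 1, ∀ y ∈ Icc (0:ℝ) 1, Q x y ∈ Icc (0:ℝ) 1) ∧
  (∀ x₁ x₂ y, x₁ ∈ Icc (0:ℝ) 1 → x₂ ∈ Icc (0:ℝ) 1 → y ∈ Icc (0:ℝ) 1 →
    x₁ ≤ x₂ → Q x₁ y ≤ Q x₂ y) ∧
  (∀ x y₁ y₂, x ∈ Icc (0:ℝ) 1 → y₁ ∈ Icc (0:ℝ) 1 → y₂ ∈ Icc (0:ℝ) 1 →
    y₁ ≤ y₂ → Q x y₁ ≤ Q x y₂) ∧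
  (∀ x₁ x₂ y₁ y₂, x₁ ∈ Icc (0:ℝ) 1 → x₂ ∈ Icc (0:ℝ) 1 → y₁ ∈ Icc (0:ℝ) 1 →
    y₂ ∈ Icc (0:ℝ) 1 → |Q x₂ y₂ - Q x₁ y₁| ≤ |x₂ - x₁| + |y₂ - y₁|)

/-- A copula: a quasi-copula all of whose rectangle volumes are nonnegative. -/
def Copula (C : ℝ → ℝ → ℝ) : Prop :=
  QuasiCopula C ∧
  ∀ x₁ x₂ y₁ y₂, x₁ ∈ Icc (0:ℝ) 1 → x₂ ∈ Icc (0:ℝ) 1 → y₁ ∈ Icc (0:ℝ) 1 →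
    y₂ ∈ Icc (0:ℝ) 1 → x₁ ≤ x₂ → y₁ ≤ y₂ → 0 ≤ Vol C x₁ x₂ y₁ y₂

/-- `(P,Q)` is an imprecise copula on `[0,1]²`. -/
def ImpreciseCopula (P Q : ℝ → ℝ → ℝ) : Prop :=
  Boundary P ∧ Boundary Q ∧
  ∀ x₁ x₂ y₁ y₂, x₁ ∈ Icc (0:ℝ) 1 → x₂ ∈ Icc (0:ℝ) 1 → y₁ ∈ Icc (0:ℝ) 1 →
    y₂ ∈ Icc (0:ℝ) 1 → x₁ ≤ x₂ → y₁ ≤ y₂ →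
    0 ≤ Q x₁ y₁ + P x₂ y₂ - P x₁ y₂ - P x₂ y₁ ∧
    0 ≤ P x₁ y₁ + Q x₂ y₂ - P x₁ y₂ - P x₂ y₁ ∧
    0 ≤ Q x₁ y₁ + Q x₂ y₂ - Q x₁ y₂ - P x₂ y₁ ∧
    0 ≤ Q x₁ y₁ + Q x₂ y₂ - P x₁ y₂ - Q x₂ y₁

/-- The value at `(x,y)` of the patchwork along the copula `C` on the rectangle
`[a,b]×[c,d]` with patch quasi-copula `Qk`. -/
noncomputable def patchVal (C : ℝ → ℝ → ℝ) (a b c d : ℝ) (Qk : ℝ → ℝ → ℝ)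
    (x y : ℝ) : ℝ :=
  if 0 < Vol C a b c d then
    C x c + C a y - C a c +
      Vol C a b c d *
        Qk ((C x d - C x c - C a d + C a c) / Vol C a b c d)
           ((C b y - C a y - C b c + C a c) / Vol C a b c d)
  else
    C x c + C a y - C a c

/-- `H` is the patchwork of the quasi-copulas `Qs k` along the copula `C` and the
rectangles `[a k, b k] × [c k, d k]`. -/
def IsPatchwork {m : ℕ} (C : ℝ → ℝ → ℝ) (a b c d : Fin m → ℝ)
    (Qs : Fin m → ℝ → ℝ → ℝ) (H : ℝ → ℝ → ℝ) : Prop :=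
  ∀ k : Fin m, ∀ x ∈ Icc (a k) (b k), ∀ y ∈ Icc (c k) (d k),
    H x y = patchVal C (a k) (b k) (c k) (d k) (Qs k) x y

section Aux

variable {C : ℝ → ℝ → ℝ}

lemma patchVal_of_pos {A B cc dd : ℝ} (h : 0 < Vol C A B cc dd) (Qk : ℝ → ℝ → ℝ) (x y : ℝ) :
    patchVal C A B cc dd Qk x y =
      C x cc + C A y - C A cc + Vol C A B cc dd *
        Qk ((C x dd - C x cc - C A dd + C A cc) / Vol C A B cc dd)
           ((C B y - C A y - C B cc + C A cc) / Vol C A B cc dd) := by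
  simp only [patchVal, if_pos h]

lemma patchVal_of_zero {A B cc dd : ℝ} (h : ¬ 0 < Vol C A B cc dd) (Qk : ℝ → ℝ → ℝ) (x y : ℝ) :
    patchVal C A B cc dd Qk x y = C x cc + C A y - C A cc := by
  simp only [patchVal, if_neg h]

lemma f_facts (hC : Copula C) {A B cc dd : ℝ}
    (hA : 0 ≤ A) (hB : B ≤ 1) (hc : 0 ≤ cc) (hcd : cc ≤ dd) (hd : dd ≤ 1)
    (hV : 0 < Vol C A B cc dd) {x : ℝ} (hx : x ∈ Icc A B) :
    (C x dd - C x cc - C A dd + C A cc) / Vol C A B cc dd ∈ Icc (0:ℝ) 1 := by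
  have hx01 : x ∈ Icc (0:ℝ) 1 := ⟨hA.trans hx.1, hx.2.trans hB⟩
  have hA01 : A ∈ Icc (0:ℝ) 1 := ⟨hA, hx.1.trans hx01.2⟩
  have hB01 : B ∈ Icc (0:ℝ) 1 := ⟨hx01.1.trans hx.2, hB⟩
  have hc01 : cc ∈ Icc (0:ℝ) 1 := ⟨hc, hcd.trans hd⟩
  have hd01 : dd ∈ Icc (0:ℝ) 1 := ⟨hc.trans hcd, hd⟩
  have v1 := hC.2 A x cc dd hA01 hx01 hc01 hd01 hx.1 hcd
  have v2 := hC.2 x B cc dd hx01 hB01 hc01 hd01 hx.2 hcd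
  simp only [Vol] at v1 v2
  constructor
  · exact div_nonneg (by linarith) hV.le
  · rw [div_le_one hV]
    simp only [Vol]
    linarith

lemma f_mono (hC : Copula C) {A B cc dd : ℝ}
    (hA : 0 ≤ A) (hB : B ≤ 1) (hc : 0 ≤ cc) (hcd : cc ≤ dd) (hd : dd ≤ 1)
    (hV : 0 < Vol C A B cc dd) {x₁ x₂ : ℝ} (h1 : x₁ ∈ Icc A B) (h2 : x₂ ∈ Icc A B)
    (h12 : x₁ ≤ x₂) :
    (C x₁ dd - C x₁ cc - C A dd + C A cc) / Vol C A B cc dd ≤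
      (C x₂ dd - C x₂ cc - C A dd + C A cc) / Vol C A B cc dd := by
  have h101 : x₁ ∈ Icc (0:ℝ) 1 := ⟨hA.trans h1.1, h1.2.trans hB⟩
  have h201 : x₂ ∈ Icc (0:ℝ) 1 := ⟨hA.trans h2.1, h2.2.trans hB⟩
  have hc01 : cc ∈ Icc (0:ℝ) 1 := ⟨hc, hcd.trans hd⟩
  have hd01 : dd ∈ Icc (0:ℝ) 1 := ⟨hc.trans hcd, hd⟩
  have v := hC.2 x₁ x₂ cc dd h101 h201 hc01 hd01 h12 hcd
  simp only [Vol] at v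
  exact (div_le_div_iff_of_pos_right hV).mpr (by linarith)

lemma g_facts (hC : Copula C) {A B cc dd : ℝ}
    (hA : 0 ≤ A) (hAB : A ≤ B) (hB : B ≤ 1) (hc : 0 ≤ cc) (hd : dd ≤ 1)
    (hV : 0 < Vol C A B cc dd) {y : ℝ} (hy : y ∈ Icc cc dd) :
    (C B y - C A y - C B cc + C A cc) / Vol C A B cc dd ∈ Icc (0:ℝ) 1 := by
  have hy01 : y ∈ Icc (0:ℝ) 1 := ⟨hc.trans hy.1, hy.2.trans hd⟩
  have hA01 : A ∈ Icc (0:ℝ) 1 := ⟨hA, hAB.trans hB⟩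
  have hB01 : B ∈ Icc (0:ℝ) 1 := ⟨hA.trans hAB, hB⟩
  have hc01 : cc ∈ Icc (0:ℝ) 1 := ⟨hc, hy.1.trans hy01.2⟩
  have hd01 : dd ∈ Icc (0:ℝ) 1 := ⟨hy01.1.trans hy.2, hd⟩
  have v1 := hC.2 A B cc y hA01 hB01 hc01 hy01 hAB hy.1
  have v2 := hC.2 A B y dd hA01 hB01 hy01 hd01 hAB hy.2
  simp only [Vol] at v1 v2
  constructor
  · exact div_nonneg (by linarith) hV.le
  · rw [div_le_one hV]
    simp only [Vol]
    linarith

lemma g_mono (hC : Copula C) {A B cc dd : ℝ}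
    (hA : 0 ≤ A) (hAB : A ≤ B) (hB : B ≤ 1) (hc : 0 ≤ cc) (hd : dd ≤ 1)
    (hV : 0 < Vol C A B cc dd) {y₁ y₂ : ℝ} (h1 : y₁ ∈ Icc cc dd) (h2 : y₂ ∈ Icc cc dd)
    (h12 : y₁ ≤ y₂) :
    (C B y₁ - C A y₁ - C B cc + C A cc) / Vol C A B cc dd ≤
      (C B y₂ - C A y₂ - C B cc + C A cc) / Vol C A B cc dd := by
  have h101 : y₁ ∈ Icc (0:ℝ) 1 := ⟨hc.trans h1.1, h1.2.trans hd⟩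
  have h201 : y₂ ∈ Icc (0:ℝ) 1 := ⟨hc.trans h2.1, h2.2.trans hd⟩
  have hA01 : A ∈ Icc (0:ℝ) 1 := ⟨hA, hAB.trans hB⟩
  have hB01 : B ∈ Icc (0:ℝ) 1 := ⟨hA.trans hAB, hB⟩
  have v := hC.2 A B y₁ y₂ hA01 hB01 h101 h201 hAB h12
  simp only [Vol] at v
  exact (div_le_div_iff_of_pos_right hV).mpr (by linarith)

end Aux
section Anchor

lemma exists_eps {m : ℕ} (f g : Fin m → ℝ) (A B : ℝ) (hA : 0 < A) (hB : 0 < B) :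
    ∃ ε : ℝ, 0 < ε ∧ ε ≤ A ∧ ε ≤ B ∧ (∀ k, 0 < f k → ε ≤ f k) ∧ (∀ k, 0 < g k → ε ≤ g k) := by
  classical
  set s : Finset ℝ :=
    (({A, B} : Finset ℝ) ∪ Finset.univ.image f ∪ Finset.univ.image g).filter (fun t => 0 < t)
    with hs
  have hAmem : A ∈ s := by
    simp [hs, hA]
  have hne : s.Nonempty := ⟨A, hAmem⟩
  refine ⟨s.min' hne, ?_, s.min'_le A hAmem, ?_, ?_, ?_⟩
  · have h := s.min'_mem hne
    simp only [hs, Finset.mem_filter] at h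
    exact h.2
  · exact s.min'_le B (by simp [hs, hB])
  · intro k hk
    refine s.min'_le _ ?_
    simp only [hs, Finset.mem_filter, Finset.mem_union, Finset.mem_image, Finset.mem_univ]
    exact ⟨Or.inl (Or.inr ⟨k, trivial, rfl⟩), hk⟩
  · intro k hk
    refine s.min'_le _ ?_
    simp only [hs, Finset.mem_filter, Finset.mem_union, Finset.mem_image, Finset.mem_univ]
    exact ⟨Or.inr ⟨k, trivial, rfl⟩, hk⟩

variable {m : ℕ} {a b c d : Fin m → ℝ}
variable (hcover : ∀ x ∈ Icc (0:ℝ) 1, ∀ y ∈ Icc (0:ℝ) 1,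
      ∃ k, x ∈ Icc (a k) (b k) ∧ y ∈ Icc (c k) (d k))

include hcover

lemma anchor_ll (x y : ℝ) (hx0 : 0 ≤ x) (hx1 : x < 1) (hy0 : 0 ≤ y) (hy1 : y < 1) :
    ∃ k, a k ≤ x ∧ x < b k ∧ c k ≤ y ∧ y < d k := by
  obtain ⟨ε, hε, hεA, hεB, hf, hg⟩ := exists_eps (fun k => a k - x) (fun k => c k - y)
    (1 - x) (1 - y) (by linarith) (by linarith)
  obtain ⟨k, hk1, hk2⟩ := hcover (x + ε/2) ⟨by linarith, by linarith⟩
    (y + ε/2) ⟨by linarith, by linarith⟩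
  refine ⟨k, ?_, by linarith [hk1.2], ?_, by linarith [hk2.2]⟩
  · by_contra h
    push_neg at h
    have := hf k (by simpa using by linarith : 0 < a k - x)
    linarith [hk1.1]
  · by_contra h
    push_neg at h
    have := hg k (by simpa using by linarith : 0 < c k - y)
    linarith [hk2.1]

lemma anchor_ur (x y : ℝ) (hx0 : 0 < x) (hx1 : x ≤ 1) (hy0 : 0 < y) (hy1 : y ≤ 1) :
    ∃ k, a k < x ∧ x ≤ b k ∧ c k < y ∧ y ≤ d k := by
  obtain ⟨ε, hε, hεA, hεB, hf, hg⟩ := exists_eps (fun k => x - b k) (fun k => y - d k)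
    x y hx0 hy0
  obtain ⟨k, hk1, hk2⟩ := hcover (x - ε/2) ⟨by linarith, by linarith⟩
    (y - ε/2) ⟨by linarith, by linarith⟩
  refine ⟨k, by linarith [hk1.1], ?_, by linarith [hk2.1], ?_⟩
  · by_contra h
    push_neg at h
    have := hf k (by simpa using by linarith : 0 < x - b k)
    linarith [hk1.2]
  · by_contra h
    push_neg at h
    have := hg k (by simpa using by linarith : 0 < y - d k)
    linarith [hk2.2]

lemma anchor_lr (x y : ℝ) (hx0 : 0 < x) (hx1 : x ≤ 1) (hy0 : 0 ≤ y) (hy1 : y < 1) :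
    ∃ k, a k < x ∧ x ≤ b k ∧ c k ≤ y ∧ y < d k := by
  obtain ⟨ε, hε, hεA, hεB, hf, hg⟩ := exists_eps (fun k => x - b k) (fun k => c k - y)
    x (1 - y) hx0 (by linarith)
  obtain ⟨k, hk1, hk2⟩ := hcover (x - ε/2) ⟨by linarith, by linarith⟩
    (y + ε/2) ⟨by linarith, by linarith⟩
  refine ⟨k, by linarith [hk1.1], ?_, ?_, by linarith [hk2.2]⟩
  · by_contra h
    push_neg at h
    have := hf k (by simpa using by linarith : 0 < x - b k)
    linarith [hk1.2]
  · by_contra h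
    push_neg at h
    have := hg k (by simpa using by linarith : 0 < c k - y)
    linarith [hk2.1]

lemma anchor_ul (x y : ℝ) (hx0 : 0 ≤ x) (hx1 : x < 1) (hy0 : 0 < y) (hy1 : y ≤ 1) :
    ∃ k, a k ≤ x ∧ x < b k ∧ c k < y ∧ y ≤ d k := by
  obtain ⟨ε, hε, hεA, hεB, hf, hg⟩ := exists_eps (fun k => a k - x) (fun k => y - d k)
    (1 - x) y (by linarith) hy0
  obtain ⟨k, hk1, hk2⟩ := hcover (x + ε/2) ⟨by linarith, by linarith⟩
    (y - ε/2) ⟨by linarith, by linarith⟩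
  refine ⟨k, ?_, by linarith [hk1.2], by linarith [hk2.1], ?_⟩
  · by_contra h
    push_neg at h
    have := hf k (by simpa using by linarith : 0 < a k - x)
    linarith [hk1.1]
  · by_contra h
    push_neg at h
    have := hg k (by simpa using by linarith : 0 < y - d k)
    linarith [hk2.2]

end Anchor
section Local

variable {m : ℕ} {C : ℝ → ℝ → ℝ} {a b c d : Fin m → ℝ}
  {P Q : Fin m → ℝ → ℝ → ℝ} {HP HQ : ℝ → ℝ → ℝ}

lemma local4
    (hC : Copula C)
    (hrect : ∀ k, 0 ≤ a k ∧ a k ≤ b k ∧ b k ≤ 1 ∧ 0 ≤ c k ∧ c k ≤ d k ∧ d k ≤ 1)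
    (himp : ∀ k, ImpreciseCopula (P k) (Q k))
    (hHP : IsPatchwork C a b c d P HP) (hHQ : IsPatchwork C a b c d Q HQ)
    (k : Fin m) {x₁ x₂ y₁ y₂ : ℝ}
    (hx₁ : x₁ ∈ Icc (a k) (b k)) (hx₂ : x₂ ∈ Icc (a k) (b k))
    (hy₁ : y₁ ∈ Icc (c k) (d k)) (hy₂ : y₂ ∈ Icc (c k) (d k))
    (hx : x₁ ≤ x₂) (hy : y₁ ≤ y₂) :
    0 ≤ Vol HP x₁ x₂ y₁ y₂ + (HQ x₁ y₁ - HP x₁ y₁) ∧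
    0 ≤ Vol HP x₁ x₂ y₁ y₂ + (HQ x₂ y₂ - HP x₂ y₂) ∧
    0 ≤ Vol HQ x₁ x₂ y₁ y₂ + (HQ x₂ y₁ - HP x₂ y₁) ∧
    0 ≤ Vol HQ x₁ x₂ y₁ y₂ + (HQ x₁ y₂ - HP x₁ y₂) := by
  obtain ⟨hA, hAB, hB, hc, hcd, hd⟩ := hrect k
  rcases lt_or_ge 0 (Vol C (a k) (b k) (c k) (d k)) with hV | hV
  · have hf1 := f_facts hC hA hB hc hcd hd hV hx₁
    have hf2 := f_facts hC hA hB hc hcd hd hV hx₂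
    have hg1 := g_facts hC hA hAB hB hc hd hV hy₁
    have hg2 := g_facts hC hA hAB hB hc hd hV hy₂
    have hf12 := f_mono hC hA hB hc hcd hd hV hx₁ hx₂ hx
    have hg12 := g_mono hC hA hAB hB hc hd hV hy₁ hy₂ hy
    obtain ⟨i1, i2, i3, i4⟩ := (himp k).2.2 _ _ _ _ hf1 hf2 hg1 hg2 hf12 hg12
    have hVle := hV.le
    have eP : Vol HP x₁ x₂ y₁ y₂ = HP x₁ y₁ + HP x₂ y₂ - HP x₁ y₂ - HP x₂ y₁ := rfl
    have eQ : Vol HQ x₁ x₂ y₁ y₂ = HQ x₁ y₁ + HQ x₂ y₂ - HQ x₁ y₂ - HQ x₂ y₁ := rfl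
    simp only [eP, eQ, hHP k x₁ hx₁ y₁ hy₁, hHP k x₂ hx₂ y₂ hy₂, hHP k x₁ hx₁ y₂ hy₂,
      hHP k x₂ hx₂ y₁ hy₁, hHQ k x₁ hx₁ y₁ hy₁, hHQ k x₂ hx₂ y₂ hy₂, hHQ k x₁ hx₁ y₂ hy₂,
      hHQ k x₂ hx₂ y₁ hy₁, patchVal_of_pos hV]
    refine ⟨?_, ?_, ?_, ?_⟩
    · nlinarith [mul_nonneg hVle i1]
    · nlinarith [mul_nonneg hVle i2]
    · nlinarith [mul_nonneg hVle i3]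
    · nlinarith [mul_nonneg hVle i4]
  · have hnot : ¬ 0 < Vol C (a k) (b k) (c k) (d k) := not_lt.mpr hV
    simp only [Vol, hHP k x₁ hx₁ y₁ hy₁, hHP k x₂ hx₂ y₂ hy₂, hHP k x₁ hx₁ y₂ hy₂,
      hHP k x₂ hx₂ y₁ hy₁, hHQ k x₁ hx₁ y₁ hy₁, hHQ k x₂ hx₂ y₂ hy₂, hHQ k x₁ hx₁ y₂ hy₂,
      hHQ k x₂ hx₂ y₁ hy₁, patchVal_of_zero hnot]
    refine ⟨le_of_eq (by ring), le_of_eq (by ring), le_of_eq (by ring), le_of_eq (by ring)⟩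

lemma D_nonneg
    (hC : Copula C)
    (hrect : ∀ k, 0 ≤ a k ∧ a k ≤ b k ∧ b k ≤ 1 ∧ 0 ≤ c k ∧ c k ≤ d k ∧ d k ≤ 1)
    (hcover : ∀ x ∈ Icc (0:ℝ) 1, ∀ y ∈ Icc (0:ℝ) 1,
      ∃ k, x ∈ Icc (a k) (b k) ∧ y ∈ Icc (c k) (d k))
    (himp : ∀ k, ImpreciseCopula (P k) (Q k))
    (hHP : IsPatchwork C a b c d P HP) (hHQ : IsPatchwork C a b c d Q HQ)
    {x y : ℝ} (hx : x ∈ Icc (0:ℝ) 1) (hy : y ∈ Icc (0:ℝ) 1) :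
    HP x y ≤ HQ x y := by
  obtain ⟨k, hxk, hyk⟩ := hcover x hx y hy
  obtain ⟨hA, hAB, hB, hc, hcd, hd⟩ := hrect k
  rw [hHP k x hxk y hyk, hHQ k x hxk y hyk]
  rcases lt_or_ge 0 (Vol C (a k) (b k) (c k) (d k)) with hV | hV
  · rw [patchVal_of_pos hV, patchVal_of_pos hV]
    have hf := f_facts hC hA hB hc hcd hd hV hxk
    have hg := g_facts hC hA hAB hB hc hd hV hyk
    have h1 := ((himp k).2.2 _ _ _ _ hf hf hg hg le_rfl le_rfl).1
    have h2 : P k ((C x (d k) - C x (c k) - C (a k) (d k) + C (a k) (c k)) / Vol C (a k) (b k) (c k) (d k))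
        ((C (b k) y - C (a k) y - C (b k) (c k) + C (a k) (c k)) / Vol C (a k) (b k) (c k) (d k)) ≤
        Q k ((C x (d k) - C x (c k) - C (a k) (d k) + C (a k) (c k)) / Vol C (a k) (b k) (c k) (d k))
        ((C (b k) y - C (a k) y - C (b k) (c k) + C (a k) (c k)) / Vol C (a k) (b k) (c k) (d k)) := by
      linarith
    nlinarith [mul_le_mul_of_nonneg_left h2 hV.le]
  · rw [patchVal_of_zero (not_lt.mpr hV), patchVal_of_zero (not_lt.mpr hV)]

lemma D_edge
    (hC : Copula C)
    (hrect : ∀ k, 0 ≤ a k ∧ a k ≤ b k ∧ b k ≤ 1 ∧ 0 ≤ c k ∧ c k ≤ d k ∧ d k ≤ 1)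
    (hqc : ∀ k, QuasiCopula (P k) ∧ QuasiCopula (Q k))
    (hHP : IsPatchwork C a b c d P HP) (hHQ : IsPatchwork C a b c d Q HQ)
    (k : Fin m) {x y : ℝ}
    (hx : x ∈ Icc (a k) (b k)) (hy : y ∈ Icc (c k) (d k))
    (h : x = a k ∨ x = b k ∨ y = c k ∨ y = d k) : HQ x y = HP x y := by
  obtain ⟨hA, hAB, hB, hc, hcd, hd⟩ := hrect k
  rw [hHP k x hx y hy, hHQ k x hx y hy]
  rcases lt_or_ge 0 (Vol C (a k) (b k) (c k) (d k)) with hV | hV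
  · rw [patchVal_of_pos hV, patchVal_of_pos hV]
    have hf := f_facts hC hA hB hc hcd hd hV hx
    have hg := g_facts hC hA hAB hB hc hd hV hy
    have key : Q k ((C x (d k) - C x (c k) - C (a k) (d k) + C (a k) (c k)) / Vol C (a k) (b k) (c k) (d k))
        ((C (b k) y - C (a k) y - C (b k) (c k) + C (a k) (c k)) / Vol C (a k) (b k) (c k) (d k)) =
        P k ((C x (d k) - C x (c k) - C (a k) (d k) + C (a k) (c k)) / Vol C (a k) (b k) (c k) (d k))
        ((C (b k) y - C (a k) y - C (b k) (c k) + C (a k) (c k)) / Vol C (a k) (b k) (c k) (d k)) := by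
      rcases h with h | h | h | h
      · subst h
        rw [show C (a k) (d k) - C (a k) (c k) - C (a k) (d k) + C (a k) (c k) = (0:ℝ) by ring,
          zero_div]
        rw [((hqc k).2.1 _ hg).2.1, ((hqc k).1.1 _ hg).2.1]
      · subst h
        rw [show C (b k) (d k) - C (b k) (c k) - C (a k) (d k) + C (a k) (c k)
              = Vol C (a k) (b k) (c k) (d k) by simp only [Vol]; ring,
          div_self (ne_of_gt hV)]
        rw [((hqc k).2.1 _ hg).2.2.2, ((hqc k).1.1 _ hg).2.2.2]
      · subst h
        rw [show C (b k) (c k) - C (a k) (c k) - C (b k) (c k) + C (a k) (c k) = (0:ℝ) by ring,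
          zero_div]
        rw [((hqc k).2.1 _ hf).1, ((hqc k).1.1 _ hf).1]
      · subst h
        rw [show C (b k) (d k) - C (a k) (d k) - C (b k) (c k) + C (a k) (c k)
              = Vol C (a k) (b k) (c k) (d k) by simp only [Vol]; ring,
          div_self (ne_of_gt hV)]
        rw [((hqc k).2.1 _ hf).2.2.1, ((hqc k).1.1 _ hf).2.2.1]
    rw [key]
  · rw [patchVal_of_zero (not_lt.mpr hV), patchVal_of_zero (not_lt.mpr hV)]

end Local
section Bound

variable {m : ℕ} {C : ℝ → ℝ → ℝ} {a b c d : Fin m → ℝ}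

lemma patch_boundary {Qs : Fin m → ℝ → ℝ → ℝ} {H : ℝ → ℝ → ℝ}
    (hC : Copula C)
    (hrect : ∀ k, 0 ≤ a k ∧ a k ≤ b k ∧ b k ≤ 1 ∧ 0 ≤ c k ∧ c k ≤ d k ∧ d k ≤ 1)
    (hcover : ∀ x ∈ Icc (0:ℝ) 1, ∀ y ∈ Icc (0:ℝ) 1,
      ∃ k, x ∈ Icc (a k) (b k) ∧ y ∈ Icc (c k) (d k))
    (hq : ∀ k, Boundary (Qs k))
    (hH : IsPatchwork C a b c d Qs H) : Boundary H := by
  have hCb : Boundary C := hC.1.1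
  have h01 : (0:ℝ) ∈ Icc (0:ℝ) 1 := ⟨le_rfl, zero_le_one⟩
  have h11 : (1:ℝ) ∈ Icc (0:ℝ) 1 := ⟨zero_le_one, le_rfl⟩
  intro x hx
  refine ⟨?_, ?_, ?_, ?_⟩
  · -- H x 0 = 0
    obtain ⟨k, hxk, h0k⟩ := hcover x hx 0 h01
    obtain ⟨hA, hAB, hB, hc, hcd, hd⟩ := hrect k
    have hA01 : a k ∈ Icc (0:ℝ) 1 := ⟨hA, hAB.trans hB⟩
    have hck : c k = 0 := le_antisymm h0k.1 hc
    rw [hH k x hxk 0 h0k]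
    rcases lt_or_ge 0 (Vol C (a k) (b k) (c k) (d k)) with hV | hV
    · rw [patchVal_of_pos hV]
      have hg0 : (C (b k) 0 - C (a k) 0 - C (b k) (c k) + C (a k) (c k)) /
          Vol C (a k) (b k) (c k) (d k) = 0 := by
        rw [hck, show C (b k) 0 - C (a k) 0 - C (b k) 0 + C (a k) 0 = (0:ℝ) by ring, zero_div]
      rw [hg0, (hq k _ (f_facts hC hA hB hc hcd hd hV hxk)).1, mul_zero, hck,
        (hCb x hx).1, (hCb (a k) hA01).1]
      ring
    · rw [patchVal_of_zero (not_lt.mpr hV), hck, (hCb x hx).1]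
      ring
  · -- H 0 x = 0
    obtain ⟨k, h0k, hxk⟩ := hcover 0 h01 x hx
    obtain ⟨hA, hAB, hB, hc, hcd, hd⟩ := hrect k
    have hc01 : c k ∈ Icc (0:ℝ) 1 := ⟨hc, hcd.trans hd⟩
    have hak : a k = 0 := le_antisymm h0k.1 hA
    rw [hH k 0 h0k x hxk]
    rcases lt_or_ge 0 (Vol C (a k) (b k) (c k) (d k)) with hV | hV
    · rw [patchVal_of_pos hV]
      have hf0 : (C 0 (d k) - C 0 (c k) - C (a k) (d k) + C (a k) (c k)) /
          Vol C (a k) (b k) (c k) (d k) = 0 := by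
        rw [hak, show C 0 (d k) - C 0 (c k) - C 0 (d k) + C 0 (c k) = (0:ℝ) by ring, zero_div]
      rw [hf0, (hq k _ (g_facts hC hA hAB hB hc hd hV hxk)).2.1, mul_zero, hak,
        (hCb x hx).2.1, (hCb (c k) hc01).2.1]
      ring
    · rw [patchVal_of_zero (not_lt.mpr hV), hak, (hCb x hx).2.1, (hCb (c k) hc01).2.1]
      ring
  · -- H x 1 = x
    obtain ⟨k, hxk, h1k⟩ := hcover x hx 1 h11
    obtain ⟨hA, hAB, hB, hc, hcd, hd⟩ := hrect k
    have hA01 : a k ∈ Icc (0:ℝ) 1 := ⟨hA, hAB.trans hB⟩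
    have hB01 : b k ∈ Icc (0:ℝ) 1 := ⟨hA.trans hAB, hB⟩
    have hc01 : c k ∈ Icc (0:ℝ) 1 := ⟨hc, hcd.trans hd⟩
    have hd01 : d k ∈ Icc (0:ℝ) 1 := ⟨hc.trans hcd, hd⟩
    have hx01 : x ∈ Icc (0:ℝ) 1 := hx
    have hdk : d k = 1 := le_antisymm hd h1k.2
    rw [hH k x hxk 1 h1k]
    rcases lt_or_ge 0 (Vol C (a k) (b k) (c k) (d k)) with hV | hV
    · rw [patchVal_of_pos hV]
      have hg1 : (C (b k) 1 - C (a k) 1 - C (b k) (c k) + C (a k) (c k)) /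
          Vol C (a k) (b k) (c k) (d k) = 1 := by
        rw [show C (b k) 1 - C (a k) 1 - C (b k) (c k) + C (a k) (c k)
            = Vol C (a k) (b k) (c k) (d k) by rw [hdk]; simp only [Vol]; ring,
          div_self (ne_of_gt hV)]
      rw [hg1, (hq k _ (f_facts hC hA hB hc hcd hd hV hxk)).2.2.1,
        mul_comm, div_mul_cancel₀ _ (ne_of_gt hV), hdk,
        (hCb x hx).2.2.1, (hCb (a k) hA01).2.2.1]
      ring
    · rw [patchVal_of_zero (not_lt.mpr hV)]
      have hVeq : Vol C (a k) (b k) (c k) (d k) = 0 :=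
        le_antisymm (not_lt.mp (not_lt.mpr hV)) (hC.2 _ _ _ _ hA01 hB01 hc01 hd01 hAB hcd)
      have v1 := hC.2 (a k) x (c k) (d k) hA01 hx01 hc01 hd01 hxk.1 hcd
      have v2 := hC.2 x (b k) (c k) (d k) hx01 hB01 hc01 hd01 hxk.2 hcd
      have hsum : Vol C (a k) x (c k) (d k) + Vol C x (b k) (c k) (d k)
          = Vol C (a k) (b k) (c k) (d k) := by simp only [Vol]; ring
      have hv1 : Vol C (a k) x (c k) (d k) = 0 := by linarith
      simp only [Vol] at hv1
      rw [hdk] at hv1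
      rw [(hCb x hx).2.2.1, (hCb (a k) hA01).2.2.1] at hv1
      rw [(hCb (a k) hA01).2.2.1]
      linarith
  · -- H 1 x = x
    obtain ⟨k, h1k, hxk⟩ := hcover 1 h11 x hx
    obtain ⟨hA, hAB, hB, hc, hcd, hd⟩ := hrect k
    have hA01 : a k ∈ Icc (0:ℝ) 1 := ⟨hA, hAB.trans hB⟩
    have hB01 : b k ∈ Icc (0:ℝ) 1 := ⟨hA.trans hAB, hB⟩
    have hc01 : c k ∈ Icc (0:ℝ) 1 := ⟨hc, hcd.trans hd⟩
    have hd01 : d k ∈ Icc (0:ℝ) 1 := ⟨hc.trans hcd, hd⟩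
    have hx01 : x ∈ Icc (0:ℝ) 1 := hx
    have hbk : b k = 1 := le_antisymm hB h1k.2
    rw [hH k 1 h1k x hxk]
    rcases lt_or_ge 0 (Vol C (a k) (b k) (c k) (d k)) with hV | hV
    · rw [patchVal_of_pos hV]
      have hf1 : (C 1 (d k) - C 1 (c k) - C (a k) (d k) + C (a k) (c k)) /
          Vol C (a k) (b k) (c k) (d k) = 1 := by
        rw [show C 1 (d k) - C 1 (c k) - C (a k) (d k) + C (a k) (c k)
            = Vol C (a k) (b k) (c k) (d k) by rw [hbk]; simp only [Vol]; ring,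
          div_self (ne_of_gt hV)]
      rw [hf1, (hq k _ (g_facts hC hA hAB hB hc hd hV hxk)).2.2.2,
        mul_comm, div_mul_cancel₀ _ (ne_of_gt hV), hbk,
        (hCb x hx).2.2.2, (hCb (c k) hc01).2.2.2]
      ring
    · rw [patchVal_of_zero (not_lt.mpr hV)]
      have v1 := hC.2 (a k) (b k) (c k) x hA01 hB01 hc01 hx01 hAB hxk.1
      have v2 := hC.2 (a k) (b k) x (d k) hA01 hB01 hx01 hd01 hAB hxk.2
      have hVeq : Vol C (a k) (b k) (c k) (d k) = 0 :=
        le_antisymm (not_lt.mp (not_lt.mpr hV)) (hC.2 _ _ _ _ hA01 hB01 hc01 hd01 hAB hcd)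
      have hsum : Vol C (a k) (b k) (c k) x + Vol C (a k) (b k) x (d k)
          = Vol C (a k) (b k) (c k) (d k) := by simp only [Vol]; ring
      have hv1 : Vol C (a k) (b k) (c k) x = 0 := by linarith
      simp only [Vol] at hv1
      rw [hbk] at hv1
      rw [(hCb x hx).2.2.2, (hCb (c k) hc01).2.2.2] at hv1
      rw [(hCb (c k) hc01).2.2.2]
      linarith

end Bound
section Claims

variable {m : ℕ} {C : ℝ → ℝ → ℝ} {a b c d : Fin m → ℝ}
  {P Q : Fin m → ℝ → ℝ → ℝ} {HP HQ : ℝ → ℝ → ℝ}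

lemma card_sub_aux {s' s : Finset (Fin m)} {k : Fin m} (h1 : s' ⊆ s.erase k)
    (h2 : k ∈ s) {n : ℕ} (h3 : s.card ≤ n + 1) : s'.card ≤ n := by
  have h4 := Finset.card_le_card h1
  rw [Finset.card_erase_of_mem h2] at h4
  omega

lemma claims
    (hC : Copula C)
    (hrect : ∀ k, 0 ≤ a k ∧ a k ≤ b k ∧ b k ≤ 1 ∧ 0 ≤ c k ∧ c k ≤ d k ∧ d k ≤ 1)
    (hcover : ∀ x ∈ Icc (0:ℝ) 1, ∀ y ∈ Icc (0:ℝ) 1,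
      ∃ k, x ∈ Icc (a k) (b k) ∧ y ∈ Icc (c k) (d k))
    (hqc : ∀ k, QuasiCopula (P k) ∧ QuasiCopula (Q k))
    (himp : ∀ k, ImpreciseCopula (P k) (Q k))
    (hHP : IsPatchwork C a b c d P HP) (hHQ : IsPatchwork C a b c d Q HQ) :
    ∀ n : ℕ, ∀ x₁ x₂ y₁ y₂ : ℝ,
      0 ≤ x₁ → x₁ ≤ x₂ → x₂ ≤ 1 → 0 ≤ y₁ → y₁ ≤ y₂ → y₂ ≤ 1 →
      (Finset.univ.filter (fun k : Fin m =>
        max (a k) x₁ < min (b k) x₂ ∧ max (c k) y₁ < min (d k) y₂)).card ≤ n →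
      0 ≤ Vol HP x₁ x₂ y₁ y₂ + (HQ x₁ y₁ - HP x₁ y₁) ∧
      0 ≤ Vol HP x₁ x₂ y₁ y₂ + (HQ x₂ y₂ - HP x₂ y₂) ∧
      0 ≤ Vol HQ x₁ x₂ y₁ y₂ + (HQ x₂ y₁ - HP x₂ y₁) ∧
      0 ≤ Vol HQ x₁ x₂ y₁ y₂ + (HQ x₁ y₂ - HP x₁ y₂) := by
  classical
  have Dnn : ∀ u v : ℝ, u ∈ Icc (0:ℝ) 1 → v ∈ Icc (0:ℝ) 1 → HP u v ≤ HQ u v :=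
    fun u v hu hv => D_nonneg hC hrect hcover himp hHP hHQ hu hv
  have hdeg : ∀ x₁ x₂ y₁ y₂ : ℝ, 0 ≤ x₁ → x₁ ≤ x₂ → x₂ ≤ 1 → 0 ≤ y₁ → y₁ ≤ y₂ → y₂ ≤ 1 →
      (x₁ = x₂ ∨ y₁ = y₂) →
      0 ≤ Vol HP x₁ x₂ y₁ y₂ + (HQ x₁ y₁ - HP x₁ y₁) ∧
      0 ≤ Vol HP x₁ x₂ y₁ y₂ + (HQ x₂ y₂ - HP x₂ y₂) ∧
      0 ≤ Vol HQ x₁ x₂ y₁ y₂ + (HQ x₂ y₁ - HP x₂ y₁) ∧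
      0 ≤ Vol HQ x₁ x₂ y₁ y₂ + (HQ x₁ y₂ - HP x₁ y₂) := by
    intro x₁ x₂ y₁ y₂ h0x hxx hx1 h0y hyy hy1 h
    have m1 : x₁ ∈ Icc (0:ℝ) 1 := ⟨h0x, hxx.trans hx1⟩
    have m2 : x₂ ∈ Icc (0:ℝ) 1 := ⟨h0x.trans hxx, hx1⟩
    have m3 : y₁ ∈ Icc (0:ℝ) 1 := ⟨h0y, hyy.trans hy1⟩
    have m4 : y₂ ∈ Icc (0:ℝ) 1 := ⟨h0y.trans hyy, hy1⟩
    have d11 := Dnn x₁ y₁ m1 m3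
    have d12 := Dnn x₁ y₂ m1 m4
    have d21 := Dnn x₂ y₁ m2 m3
    have d22 := Dnn x₂ y₂ m2 m4
    rcases h with h | h <;> subst h <;>
      refine ⟨?_, ?_, ?_, ?_⟩ <;> simp only [Vol] <;> linarith
  intro n
  induction n with
  | zero =>
    intro x₁ x₂ y₁ y₂ h0x hxx hx1 h0y hyy hy1 hcard
    rcases eq_or_lt_of_le hxx with h | hxlt
    · exact hdeg _ _ _ _ h0x hxx hx1 h0y hyy hy1 (Or.inl h)
    rcases eq_or_lt_of_le hyy with h | hylt
    · exact hdeg _ _ _ _ h0x hxx hx1 h0y hyy hy1 (Or.inr h)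
    exfalso
    obtain ⟨k, hak, hbk, hck, hdk⟩ := anchor_ll hcover x₁ y₁ h0x (hxlt.trans_le hx1)
      h0y (hylt.trans_le hy1)
    have hkmem : k ∈ Finset.univ.filter (fun k : Fin m =>
        max (a k) x₁ < min (b k) x₂ ∧ max (c k) y₁ < min (d k) y₂) := by
      simp only [Finset.mem_filter, Finset.mem_univ, true_and]
      exact ⟨by rw [max_eq_right hak]; exact lt_min hbk hxlt,
             by rw [max_eq_right hck]; exact lt_min hdk hylt⟩
    have := Finset.card_pos.mpr ⟨k, hkmem⟩
    omega
  | succ n ih =>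
    intro x₁ x₂ y₁ y₂ h0x hxx hx1 h0y hyy hy1 hcard
    rcases eq_or_lt_of_le hxx with h | hxlt
    · exact hdeg _ _ _ _ h0x hxx hx1 h0y hyy hy1 (Or.inl h)
    rcases eq_or_lt_of_le hyy with h | hylt
    · exact hdeg _ _ _ _ h0x hxx hx1 h0y hyy hy1 (Or.inr h)
    refine ⟨?_, ?_, ?_, ?_⟩
    · -- (1) D at lower-left corner
      obtain ⟨k, hak, hbk, hck, hdk⟩ := anchor_ll hcover x₁ y₁ h0x (hxlt.trans_le hx1)
        h0y (hylt.trans_le hy1)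
      obtain ⟨hA, hAB, hB, hc, hcd, hd⟩ := hrect k
      have hkmem : k ∈ Finset.univ.filter (fun k : Fin m =>
          max (a k) x₁ < min (b k) x₂ ∧ max (c k) y₁ < min (d k) y₂) := by
        simp only [Finset.mem_filter, Finset.mem_univ, true_and]
        exact ⟨by rw [max_eq_right hak]; exact lt_min hbk hxlt,
               by rw [max_eq_right hck]; exact lt_min hdk hylt⟩
      have hx₁u : x₁ < min (b k) x₂ := lt_min hbk hxlt
      have hy₁v : y₁ < min (d k) y₂ := lt_min hdk hylt
      have hux₂ : min (b k) x₂ ≤ x₂ := min_le_right _ _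
      have hub : min (b k) x₂ ≤ b k := min_le_left _ _
      have hvy₂ : min (d k) y₂ ≤ y₂ := min_le_right _ _
      have hvd : min (d k) y₂ ≤ d k := min_le_left _ _
      have LA := (local4 hC hrect himp hHP hHQ k
        ⟨hak, hx₁u.le.trans hub⟩ ⟨hak.trans hx₁u.le, hub⟩
        ⟨hck, hy₁v.le.trans hvd⟩ ⟨hck.trans hy₁v.le, hvd⟩ hx₁u.le hy₁v.le).1
      have LB : 0 ≤ Vol HP (min (b k) x₂) x₂ y₁ (min (d k) y₂) := by
        rcases le_or_gt x₂ (b k) with h | h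
        · rw [min_eq_right h]
          exact le_of_eq (by simp only [Vol]; ring)
        · have hu : min (b k) x₂ = b k := min_eq_left h.le
          have hDB : HQ (min (b k) x₂) y₁ = HP (min (b k) x₂) y₁ := by
            rw [hu]
            exact D_edge hC hrect hqc hHP hHQ k ⟨hAB, le_rfl⟩ ⟨hck, hdk.le⟩
              (Or.inr (Or.inl rfl))
          have hsub : (Finset.univ.filter (fun k' : Fin m =>
              max (a k') (min (b k) x₂) < min (b k') x₂ ∧
              max (c k') y₁ < min (d k') (min (d k) y₂))) ⊆
              (Finset.univ.filter (fun k' : Fin m =>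
              max (a k') x₁ < min (b k') x₂ ∧ max (c k') y₁ < min (d k') y₂)).erase k := by
            intro k' hk'
            simp only [Finset.mem_filter, Finset.mem_univ, true_and] at hk'
            rw [Finset.mem_erase]
            constructor
            · rintro rfl
              exact absurd hk'.1 (not_lt.mpr (le_max_right _ _))
            · exact Finset.mem_filter.mpr ⟨Finset.mem_univ _,
                lt_of_le_of_lt (max_le_max le_rfl hx₁u.le) hk'.1,
                lt_of_lt_of_le hk'.2 (min_le_min le_rfl hvy₂)⟩
          have hcB := card_sub_aux hsub hkmem hcard
          have hih := (ih (min (b k) x₂) x₂ y₁ (min (d k) y₂)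
            (h0x.trans hx₁u.le) hux₂ hx1 h0y hy₁v.le (hvy₂.trans hy1) hcB).1
          linarith
      have LC : 0 ≤ Vol HP x₁ x₂ (min (d k) y₂) y₂ := by
        rcases le_or_gt y₂ (d k) with h | h
        · rw [min_eq_right h]
          exact le_of_eq (by simp only [Vol]; ring)
        · have hv : min (d k) y₂ = d k := min_eq_left h.le
          have hDC : HQ x₁ (min (d k) y₂) = HP x₁ (min (d k) y₂) := by
            rw [hv]
            exact D_edge hC hrect hqc hHP hHQ k ⟨hak, hbk.le⟩ ⟨hcd, le_rfl⟩
              (Or.inr (Or.inr (Or.inr rfl)))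
          have hsub : (Finset.univ.filter (fun k' : Fin m =>
              max (a k') x₁ < min (b k') x₂ ∧
              max (c k') (min (d k) y₂) < min (d k') y₂)) ⊆
              (Finset.univ.filter (fun k' : Fin m =>
              max (a k') x₁ < min (b k') x₂ ∧ max (c k') y₁ < min (d k') y₂)).erase k := by
            intro k' hk'
            simp only [Finset.mem_filter, Finset.mem_univ, true_and] at hk'
            rw [Finset.mem_erase]
            constructor
            · rintro rfl
              exact absurd hk'.2 (not_lt.mpr (le_max_right _ _))
            · exact Finset.mem_filter.mpr ⟨Finset.mem_univ _, hk'.1,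
                lt_of_le_of_lt (max_le_max le_rfl hy₁v.le) hk'.2⟩
          have hcC := card_sub_aux hsub hkmem hcard
          have hih := (ih x₁ x₂ (min (d k) y₂) y₂ h0x hxx hx1
            (h0y.trans hy₁v.le) hvy₂ hy1 hcC).1
          linarith
      have sp1 : Vol HP x₁ x₂ y₁ y₂ = Vol HP x₁ x₂ y₁ (min (d k) y₂) +
          Vol HP x₁ x₂ (min (d k) y₂) y₂ := by simp only [Vol]; ring
      have sp2 : Vol HP x₁ x₂ y₁ (min (d k) y₂) =
          Vol HP x₁ (min (b k) x₂) y₁ (min (d k) y₂) +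
          Vol HP (min (b k) x₂) x₂ y₁ (min (d k) y₂) := by simp only [Vol]; ring
      linarith
    · -- (2) D at upper-right corner
      obtain ⟨k, hak, hbk, hck, hdk⟩ := anchor_ur hcover x₂ y₂ (h0x.trans_lt hxlt) hx1
        (h0y.trans_lt hylt) hy1
      obtain ⟨hA, hAB, hB, hc, hcd, hd⟩ := hrect k
      have hux₂ : max (a k) x₁ < x₂ := max_lt hak hxlt
      have hvy₂ : max (c k) y₁ < y₂ := max_lt hck hylt
      have hau : a k ≤ max (a k) x₁ := le_max_left _ _
      have hx₁u : x₁ ≤ max (a k) x₁ := le_max_right _ _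
      have hcv : c k ≤ max (c k) y₁ := le_max_left _ _
      have hy₁v : y₁ ≤ max (c k) y₁ := le_max_right _ _
      have hkmem : k ∈ Finset.univ.filter (fun k : Fin m =>
          max (a k) x₁ < min (b k) x₂ ∧ max (c k) y₁ < min (d k) y₂) := by
        simp only [Finset.mem_filter, Finset.mem_univ, true_and]
        exact ⟨lt_min (hux₂.trans_le hbk) hux₂, lt_min (hvy₂.trans_le hdk) hvy₂⟩
      have LA := (local4 hC hrect himp hHP hHQ k
        ⟨hau, hux₂.le.trans hbk⟩ ⟨hak.le, hbk⟩
        ⟨hcv, hvy₂.le.trans hdk⟩ ⟨hck.le, hdk⟩ hux₂.le hvy₂.le).2.1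
      have LB : 0 ≤ Vol HP x₁ (max (a k) x₁) (max (c k) y₁) y₂ := by
        rcases le_or_gt (a k) x₁ with h | h
        · rw [max_eq_right h]
          exact le_of_eq (by simp only [Vol]; ring)
        · have hu : max (a k) x₁ = a k := max_eq_left h.le
          have hDB : HQ (max (a k) x₁) y₂ = HP (max (a k) x₁) y₂ := by
            rw [hu]
            exact D_edge hC hrect hqc hHP hHQ k ⟨le_rfl, hAB⟩ ⟨hck.le, hdk⟩ (Or.inl rfl)
          have hsub : (Finset.univ.filter (fun k' : Fin m =>
              max (a k') x₁ < min (b k') (max (a k) x₁) ∧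
              max (c k') (max (c k) y₁) < min (d k') y₂)) ⊆
              (Finset.univ.filter (fun k' : Fin m =>
              max (a k') x₁ < min (b k') x₂ ∧ max (c k') y₁ < min (d k') y₂)).erase k := by
            intro k' hk'
            simp only [Finset.mem_filter, Finset.mem_univ, true_and] at hk'
            rw [Finset.mem_erase]
            constructor
            · rintro rfl
              exact absurd hk'.1 (not_lt.mpr (min_le_right _ _))
            · exact Finset.mem_filter.mpr ⟨Finset.mem_univ _,
                lt_of_lt_of_le hk'.1 (min_le_min le_rfl hux₂.le),
                lt_of_le_of_lt (max_le_max le_rfl hy₁v) hk'.2⟩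
          have hcB := card_sub_aux hsub hkmem hcard
          have hih := (ih x₁ (max (a k) x₁) (max (c k) y₁) y₂
            h0x hx₁u (hux₂.le.trans hx1) (h0y.trans hy₁v) hvy₂.le hy1 hcB).2.1
          linarith
      have LC : 0 ≤ Vol HP x₁ x₂ y₁ (max (c k) y₁) := by
        rcases le_or_gt (c k) y₁ with h | h
        · rw [max_eq_right h]
          exact le_of_eq (by simp only [Vol]; ring)
        · have hv : max (c k) y₁ = c k := max_eq_left h.le
          have hDC : HQ x₂ (max (c k) y₁) = HP x₂ (max (c k) y₁) := by
            rw [hv]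
            exact D_edge hC hrect hqc hHP hHQ k ⟨hak.le, hbk⟩ ⟨le_rfl, hcd⟩
              (Or.inr (Or.inr (Or.inl rfl)))
          have hsub : (Finset.univ.filter (fun k' : Fin m =>
              max (a k') x₁ < min (b k') x₂ ∧
              max (c k') y₁ < min (d k') (max (c k) y₁))) ⊆
              (Finset.univ.filter (fun k' : Fin m =>
              max (a k') x₁ < min (b k') x₂ ∧ max (c k') y₁ < min (d k') y₂)).erase k := by
            intro k' hk'
            simp only [Finset.mem_filter, Finset.mem_univ, true_and] at hk'
            rw [Finset.mem_erase]
            constructor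
            · rintro rfl
              exact absurd hk'.2 (not_lt.mpr (min_le_right _ _))
            · exact Finset.mem_filter.mpr ⟨Finset.mem_univ _, hk'.1,
                lt_of_lt_of_le hk'.2 (min_le_min le_rfl hvy₂.le)⟩
          have hcC := card_sub_aux hsub hkmem hcard
          have hih := (ih x₁ x₂ y₁ (max (c k) y₁)
            h0x hxx hx1 h0y hy₁v (hvy₂.le.trans hy1) hcC).2.1
          linarith
      have sp1 : Vol HP x₁ x₂ y₁ y₂ = Vol HP x₁ x₂ y₁ (max (c k) y₁) +
          Vol HP x₁ x₂ (max (c k) y₁) y₂ := by simp only [Vol]; ring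
      have sp2 : Vol HP x₁ x₂ (max (c k) y₁) y₂ =
          Vol HP x₁ (max (a k) x₁) (max (c k) y₁) y₂ +
          Vol HP (max (a k) x₁) x₂ (max (c k) y₁) y₂ := by simp only [Vol]; ring
      linarith
    · -- (3) D at lower-right corner
      obtain ⟨k, hak, hbk, hck, hdk⟩ := anchor_lr hcover x₂ y₁ (h0x.trans_lt hxlt) hx1
        h0y (hylt.trans_le hy1)
      obtain ⟨hA, hAB, hB, hc, hcd, hd⟩ := hrect k
      have hux₂ : max (a k) x₁ < x₂ := max_lt hak hxlt
      have hy₁v : y₁ < min (d k) y₂ := lt_min hdk hylt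
      have hau : a k ≤ max (a k) x₁ := le_max_left _ _
      have hx₁u : x₁ ≤ max (a k) x₁ := le_max_right _ _
      have hvy₂ : min (d k) y₂ ≤ y₂ := min_le_right _ _
      have hvd : min (d k) y₂ ≤ d k := min_le_left _ _
      have hkmem : k ∈ Finset.univ.filter (fun k : Fin m =>
          max (a k) x₁ < min (b k) x₂ ∧ max (c k) y₁ < min (d k) y₂) := by
        simp only [Finset.mem_filter, Finset.mem_univ, true_and]
        exact ⟨lt_min (hux₂.trans_le hbk) hux₂,
          by rw [max_eq_right hck]; exact lt_min hdk hylt⟩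
      have LA := (local4 hC hrect himp hHP hHQ k
        ⟨hau, hux₂.le.trans hbk⟩ ⟨hak.le, hbk⟩
        ⟨hck, hy₁v.le.trans hvd⟩ ⟨hck.trans hy₁v.le, hvd⟩ hux₂.le hy₁v.le).2.2.1
      have LB : 0 ≤ Vol HQ x₁ (max (a k) x₁) y₁ (min (d k) y₂) := by
        rcases le_or_gt (a k) x₁ with h | h
        · rw [max_eq_right h]
          exact le_of_eq (by simp only [Vol]; ring)
        · have hu : max (a k) x₁ = a k := max_eq_left h.le
          have hDB : HQ (max (a k) x₁) y₁ = HP (max (a k) x₁) y₁ := by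
            rw [hu]
            exact D_edge hC hrect hqc hHP hHQ k ⟨le_rfl, hAB⟩ ⟨hck, hdk.le⟩ (Or.inl rfl)
          have hsub : (Finset.univ.filter (fun k' : Fin m =>
              max (a k') x₁ < min (b k') (max (a k) x₁) ∧
              max (c k') y₁ < min (d k') (min (d k) y₂))) ⊆
              (Finset.univ.filter (fun k' : Fin m =>
              max (a k') x₁ < min (b k') x₂ ∧ max (c k') y₁ < min (d k') y₂)).erase k := by
            intro k' hk'
            simp only [Finset.mem_filter, Finset.mem_univ, true_and] at hk'
            rw [Finset.mem_erase]
            constructor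
            · rintro rfl
              exact absurd hk'.1 (not_lt.mpr (min_le_right _ _))
            · exact Finset.mem_filter.mpr ⟨Finset.mem_univ _,
                lt_of_lt_of_le hk'.1 (min_le_min le_rfl hux₂.le),
                lt_of_lt_of_le hk'.2 (min_le_min le_rfl hvy₂)⟩
          have hcB := card_sub_aux hsub hkmem hcard
          have hih := (ih x₁ (max (a k) x₁) y₁ (min (d k) y₂)
            h0x hx₁u (hux₂.le.trans hx1) h0y hy₁v.le (hvy₂.trans hy1) hcB).2.2.1
          linarith
      have LC : 0 ≤ Vol HQ x₁ x₂ (min (d k) y₂) y₂ := by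
        rcases le_or_gt y₂ (d k) with h | h
        · rw [min_eq_right h]
          exact le_of_eq (by simp only [Vol]; ring)
        · have hv : min (d k) y₂ = d k := min_eq_left h.le
          have hDC : HQ x₂ (min (d k) y₂) = HP x₂ (min (d k) y₂) := by
            rw [hv]
            exact D_edge hC hrect hqc hHP hHQ k ⟨hak.le, hbk⟩ ⟨hcd, le_rfl⟩
              (Or.inr (Or.inr (Or.inr rfl)))
          have hsub : (Finset.univ.filter (fun k' : Fin m =>
              max (a k') x₁ < min (b k') x₂ ∧
              max (c k') (min (d k) y₂) < min (d k') y₂)) ⊆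
              (Finset.univ.filter (fun k' : Fin m =>
              max (a k') x₁ < min (b k') x₂ ∧ max (c k') y₁ < min (d k') y₂)).erase k := by
            intro k' hk'
            simp only [Finset.mem_filter, Finset.mem_univ, true_and] at hk'
            rw [Finset.mem_erase]
            constructor
            · rintro rfl
              exact absurd hk'.2 (not_lt.mpr (le_max_right _ _))
            · exact Finset.mem_filter.mpr ⟨Finset.mem_univ _, hk'.1,
                lt_of_le_of_lt (max_le_max le_rfl hy₁v.le) hk'.2⟩
          have hcC := card_sub_aux hsub hkmem hcard
          have hih := (ih x₁ x₂ (min (d k) y₂) y₂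
            h0x hxx hx1 (h0y.trans hy₁v.le) hvy₂ hy1 hcC).2.2.1
          linarith
      have sp1 : Vol HQ x₁ x₂ y₁ y₂ = Vol HQ x₁ x₂ y₁ (min (d k) y₂) +
          Vol HQ x₁ x₂ (min (d k) y₂) y₂ := by simp only [Vol]; ring
      have sp2 : Vol HQ x₁ x₂ y₁ (min (d k) y₂) =
          Vol HQ x₁ (max (a k) x₁) y₁ (min (d k) y₂) +
          Vol HQ (max (a k) x₁) x₂ y₁ (min (d k) y₂) := by simp only [Vol]; ring
      linarith
    · -- (4) D at upper-left corner
      obtain ⟨k, hak, hbk, hck, hdk⟩ := anchor_ul hcover x₁ y₂ h0x (hxlt.trans_le hx1)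
        (h0y.trans_lt hylt) hy1
      obtain ⟨hA, hAB, hB, hc, hcd, hd⟩ := hrect k
      have hx₁u : x₁ < min (b k) x₂ := lt_min hbk hxlt
      have hvy₂ : max (c k) y₁ < y₂ := max_lt hck hylt
      have hux₂ : min (b k) x₂ ≤ x₂ := min_le_right _ _
      have hub : min (b k) x₂ ≤ b k := min_le_left _ _
      have hcv : c k ≤ max (c k) y₁ := le_max_left _ _
      have hy₁v : y₁ ≤ max (c k) y₁ := le_max_right _ _
      have hkmem : k ∈ Finset.univ.filter (fun k : Fin m =>
          max (a k) x₁ < min (b k) x₂ ∧ max (c k) y₁ < min (d k) y₂) := by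
        simp only [Finset.mem_filter, Finset.mem_univ, true_and]
        exact ⟨by rw [max_eq_right hak]; exact lt_min hbk hxlt,
          lt_min (hvy₂.trans_le hdk) hvy₂⟩
      have LA := (local4 hC hrect himp hHP hHQ k
        ⟨hak, hx₁u.le.trans hub⟩ ⟨hak.trans hx₁u.le, hub⟩
        ⟨hcv, hvy₂.le.trans hdk⟩ ⟨hck.le, hdk⟩ hx₁u.le hvy₂.le).2.2.2
      have LB : 0 ≤ Vol HQ (min (b k) x₂) x₂ (max (c k) y₁) y₂ := by
        rcases le_or_gt x₂ (b k) with h | h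
        · rw [min_eq_right h]
          exact le_of_eq (by simp only [Vol]; ring)
        · have hu : min (b k) x₂ = b k := min_eq_left h.le
          have hDB : HQ (min (b k) x₂) y₂ = HP (min (b k) x₂) y₂ := by
            rw [hu]
            exact D_edge hC hrect hqc hHP hHQ k ⟨hAB, le_rfl⟩ ⟨hck.le, hdk⟩
              (Or.inr (Or.inl rfl))
          have hsub : (Finset.univ.filter (fun k' : Fin m =>
              max (a k') (min (b k) x₂) < min (b k') x₂ ∧
              max (c k') (max (c k) y₁) < min (d k') y₂)) ⊆
              (Finset.univ.filter (fun k' : Fin m =>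
              max (a k') x₁ < min (b k') x₂ ∧ max (c k') y₁ < min (d k') y₂)).erase k := by
            intro k' hk'
            simp only [Finset.mem_filter, Finset.mem_univ, true_and] at hk'
            rw [Finset.mem_erase]
            constructor
            · rintro rfl
              exact absurd hk'.1 (not_lt.mpr (le_max_right _ _))
            · exact Finset.mem_filter.mpr ⟨Finset.mem_univ _,
                lt_of_le_of_lt (max_le_max le_rfl hx₁u.le) hk'.1,
                lt_of_le_of_lt (max_le_max le_rfl hy₁v) hk'.2⟩
          have hcB := card_sub_aux hsub hkmem hcard
          have hih := (ih (min (b k) x₂) x₂ (max (c k) y₁) y₂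
            (h0x.trans hx₁u.le) hux₂ hx1 (h0y.trans hy₁v) hvy₂.le hy1 hcB).2.2.2
          linarith
      have LC : 0 ≤ Vol HQ x₁ x₂ y₁ (max (c k) y₁) := by
        rcases le_or_gt (c k) y₁ with h | h
        · rw [max_eq_right h]
          exact le_of_eq (by simp only [Vol]; ring)
        · have hv : max (c k) y₁ = c k := max_eq_left h.le
          have hDC : HQ x₁ (max (c k) y₁) = HP x₁ (max (c k) y₁) := by
            rw [hv]
            exact D_edge hC hrect hqc hHP hHQ k ⟨hak, hbk.le⟩ ⟨le_rfl, hcd⟩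
              (Or.inr (Or.inr (Or.inl rfl)))
          have hsub : (Finset.univ.filter (fun k' : Fin m =>
              max (a k') x₁ < min (b k') x₂ ∧
              max (c k') y₁ < min (d k') (max (c k) y₁))) ⊆
              (Finset.univ.filter (fun k' : Fin m =>
              max (a k') x₁ < min (b k') x₂ ∧ max (c k') y₁ < min (d k') y₂)).erase k := by
            intro k' hk'
            simp only [Finset.mem_filter, Finset.mem_univ, true_and] at hk'
            rw [Finset.mem_erase]
            constructor
            · rintro rfl
              exact absurd hk'.2 (not_lt.mpr (min_le_right _ _))
            · exact Finset.mem_filter.mpr ⟨Finset.mem_univ _, hk'.1,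
                lt_of_lt_of_le hk'.2 (min_le_min le_rfl hvy₂.le)⟩
          have hcC := card_sub_aux hsub hkmem hcard
          have hih := (ih x₁ x₂ y₁ (max (c k) y₁)
            h0x hxx hx1 h0y hy₁v (hvy₂.le.trans hy1) hcC).2.2.2
          linarith
      have sp1 : Vol HQ x₁ x₂ y₁ y₂ = Vol HQ x₁ x₂ y₁ (max (c k) y₁) +
          Vol HQ x₁ x₂ (max (c k) y₁) y₂ := by simp only [Vol]; ring
      have sp2 : Vol HQ x₁ x₂ (max (c k) y₁) y₂ =
          Vol HQ x₁ (min (b k) x₂) (max (c k) y₁) y₂ +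
          Vol HQ (min (b k) x₂) x₂ (max (c k) y₁) y₂ := by simp only [Vol]; ring
      linarith

end Claims

/-- If `C` is a copula, `R_k = [a k, b k] × [c k, d k]` are rectangles with
pairwise disjoint interiors covering `[0,1]²`, each `(P k, Q k)` is an imprecise copula
with quasi-copula components, and `HP`, `HQ` are the patchworks of the `P k`'s and of
the `Q k`'s along `C` and the rectangles, then `(HP, HQ)` is an imprecise copula. -/
theorem patchwork_imprecise {m : ℕ} (C : ℝ → ℝ → ℝ) (a b c d : Fin m → ℝ)
    (P Q : Fin m → ℝ → ℝ → ℝ) (HP HQ : ℝ → ℝ → ℝ)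
    (hC : Copula C)
    (hrect : ∀ k, 0 ≤ a k ∧ a k ≤ b k ∧ b k ≤ 1 ∧ 0 ≤ c k ∧ c k ≤ d k ∧ d k ≤ 1)
    (hdisj : ∀ k k', k ≠ k' →
      (Ioo (a k) (b k) ×ˢ Ioo (c k) (d k)) ∩ (Ioo (a k') (b k') ×ˢ Ioo (c k') (d k')) = ∅)
    (hcover : ∀ x ∈ Icc (0:ℝ) 1, ∀ y ∈ Icc (0:ℝ) 1,
      ∃ k, x ∈ Icc (a k) (b k) ∧ y ∈ Icc (c k) (d k))
    (hqc : ∀ k, QuasiCopula (P k) ∧ QuasiCopula (Q k))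
    (himp : ∀ k, ImpreciseCopula (P k) (Q k))
    (hHP : IsPatchwork C a b c d P HP)
    (hHQ : IsPatchwork C a b c d Q HQ) :
    ImpreciseCopula HP HQ := by
  
  classical
  refine ⟨patch_boundary hC hrect hcover (fun k => (hqc k).1.1) hHP,
          patch_boundary hC hrect hcover (fun k => (hqc k).2.1) hHQ, ?_⟩
  intro x₁ x₂ y₁ y₂ hx₁ hx₂ hy₁ hy₂ hxx hyy
  obtain ⟨c1, c2, c3, c4⟩ := claims hC hrect hcover hqc himp hHP hHQ
    (Finset.univ.filter (fun k : Fin m =>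
      max (a k) x₁ < min (b k) x₂ ∧ max (c k) y₁ < min (d k) y₂)).card
    x₁ x₂ y₁ y₂ hx₁.1 hxx hx₂.2 hy₁.1 hyy hy₂.2 le_rfl
  have e1 : Vol HP x₁ x₂ y₁ y₂ = HP x₁ y₁ + HP x₂ y₂ - HP x₁ y₂ - HP x₂ y₁ := rfl
  have e2 : Vol HQ x₁ x₂ y₁ y₂ = HQ x₁ y₁ + HQ x₂ y₂ - HQ x₁ y₂ - HQ x₂ y₁ := rfl
  rw [e1] at c1 c2
  rw [e2] at c3 c4
  exact ⟨by linarith, by linarith, by linarith, by linarith⟩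
end

section
/- Let C : [0,1]² → [0,1] be a copula, let R_k = [a_k,b_k]×[c_k,d_k], k = 1,…,m, be rectangles with pairwise disjoint interiors whose union is [0,1]², and for each k let (P_k, Q_k) be an imprecise copula whose components P_k and Q_k are quasi-copulas. Let H_P be the patchwork of (P_1,…,P_m) along C and the rectangles R_k, and let H_Q be the patchwork of (Q_1,…,Q_m) along C and the rectangles R_k. If for every k with V_C(R_k) > 0 the pair (P_k, Q_k) is a self-dual imprecise copula, then (H_P, H_Q) is a self-dual imprecise copula. -/
open Set

/-- `D_↘^Q(x,y) = min{0, inf{V_Q([x,x']×[y,y']) : x ≤ x' ≤ 1, y ≤ y' ≤ 1}}`. -/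
noncomputable def DseC (Q : ℝ → ℝ → ℝ) (x y : ℝ) : ℝ :=
  sInf (insert 0 {v | ∃ x' y', x ≤ x' ∧ x' ≤ 1 ∧ y ≤ y' ∧ y' ≤ 1 ∧ v = Vol Q x x' y y'})

/-- `D_↙^Q(x,y) = min{0, inf{V_Q([x,x']×[y',y]) : x ≤ x' ≤ 1, 0 ≤ y' ≤ y}}`. -/
noncomputable def DswC (Q : ℝ → ℝ → ℝ) (x y : ℝ) : ℝ :=
  sInf (insert 0 {v | ∃ x' y', x ≤ x' ∧ x' ≤ 1 ∧ 0 ≤ y' ∧ y' ≤ y ∧ v = Vol Q x x' y' y})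

/-- `D_↖^Q(x,y) = min{0, inf{V_Q([x',x]×[y',y]) : 0 ≤ x' ≤ x, 0 ≤ y' ≤ y}}`. -/
noncomputable def DnwC (Q : ℝ → ℝ → ℝ) (x y : ℝ) : ℝ :=
  sInf (insert 0 {v | ∃ x' y', 0 ≤ x' ∧ x' ≤ x ∧ 0 ≤ y' ∧ y' ≤ y ∧ v = Vol Q x' x y' y})

/-- `D_↗^Q(x,y) = min{0, inf{V_Q([x',x]×[y,y']) : 0 ≤ x' ≤ x, y ≤ y' ≤ 1}}`. -/
noncomputable def DneC (Q : ℝ → ℝ → ℝ) (x y : ℝ) : ℝ :=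
  sInf (insert 0 {v | ∃ x' y', 0 ≤ x' ∧ x' ≤ x ∧ y ≤ y' ∧ y' ≤ 1 ∧ v = Vol Q x' x y y'})

/-- The main defect `D_M^Q = min(D_↘^Q, D_↖^Q)`. -/
noncomputable def DMC (Q : ℝ → ℝ → ℝ) (x y : ℝ) : ℝ := min (DseC Q x y) (DnwC Q x y)

/-- The opposite defect `D_O^Q = min(D_↙^Q, D_↗^Q)`. -/
noncomputable def DOC (Q : ℝ → ℝ → ℝ) (x y : ℝ) : ℝ := min (DswC Q x y) (DneC Q x y)

/-- `(P,Q)` is a self-dual imprecise copula: `P_M = Q` and `Q_O = P` on `[0,1]²`. -/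
def SelfDualC (P Q : ℝ → ℝ → ℝ) : Prop :=
  ImpreciseCopula P Q ∧
  (∀ x ∈ Icc (0:ℝ) 1, ∀ y ∈ Icc (0:ℝ) 1, P x y - DMC P x y = Q x y) ∧
  (∀ x ∈ Icc (0:ℝ) 1, ∀ y ∈ Icc (0:ℝ) 1, Q x y + DOC Q x y = P x y)

/-- Bundle of all patchwork hypotheses. -/
structure PW where
  m : ℕ
  C : ℝ → ℝ → ℝ
  a : Fin m → ℝ
  b : Fin m → ℝ
  c : Fin m → ℝ
  d : Fin m → ℝ
  P : Fin m → ℝ → ℝ → ℝ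
  Q : Fin m → ℝ → ℝ → ℝ
  HP : ℝ → ℝ → ℝ
  HQ : ℝ → ℝ → ℝ
  hC : Copula C
  hrect : ∀ k, 0 ≤ a k ∧ a k ≤ b k ∧ b k ≤ 1 ∧ 0 ≤ c k ∧ c k ≤ d k ∧ d k ≤ 1
  hcover : ∀ x ∈ Icc (0:ℝ) 1, ∀ y ∈ Icc (0:ℝ) 1,
      ∃ k, x ∈ Icc (a k) (b k) ∧ y ∈ Icc (c k) (d k)
  hqc : ∀ k, QuasiCopula (P k) ∧ QuasiCopula (Q k)
  himp : ∀ k, ImpreciseCopula (P k) (Q k)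
  hHP : IsPatchwork C a b c d P HP
  hHQ : IsPatchwork C a b c d Q HQ
  hsd : ∀ k, 0 < Vol C (a k) (b k) (c k) (d k) → SelfDualC (P k) (Q k)

namespace PW

variable (S : PW)

/-- Volume of the `k`-th rectangle. -/
def V (k : Fin S.m) : ℝ := Vol S.C (S.a k) (S.b k) (S.c k) (S.d k)

/-- Horizontal transform of patch `k`. -/
noncomputable def f (k : Fin S.m) (x : ℝ) : ℝ :=
  (S.C x (S.d k) - S.C x (S.c k) - S.C (S.a k) (S.d k) + S.C (S.a k) (S.c k)) / S.V k

/-- Vertical transform of patch `k`. -/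
noncomputable def g (k : Fin S.m) (y : ℝ) : ℝ :=
  (S.C (S.b k) y - S.C (S.a k) y - S.C (S.b k) (S.c k) + S.C (S.a k) (S.c k)) / S.V k

lemma memx {k : Fin S.m} {x : ℝ} (hx : x ∈ Icc (S.a k) (S.b k)) : x ∈ Icc (0:ℝ) 1 :=
  ⟨(S.hrect k).1.trans hx.1, hx.2.trans (S.hrect k).2.2.1⟩

lemma memy {k : Fin S.m} {y : ℝ} (hy : y ∈ Icc (S.c k) (S.d k)) : y ∈ Icc (0:ℝ) 1 :=
  ⟨(S.hrect k).2.2.2.1.trans hy.1, hy.2.trans (S.hrect k).2.2.2.2.2⟩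

lemma volC {x₁ x₂ y₁ y₂ : ℝ} (h1 : x₁ ∈ Icc (0:ℝ) 1) (h2 : x₂ ∈ Icc (0:ℝ) 1)
    (h3 : y₁ ∈ Icc (0:ℝ) 1) (h4 : y₂ ∈ Icc (0:ℝ) 1) (h5 : x₁ ≤ x₂) (h6 : y₁ ≤ y₂) :
    0 ≤ Vol S.C x₁ x₂ y₁ y₂ := S.hC.2 x₁ x₂ y₁ y₂ h1 h2 h3 h4 h5 h6

lemma V_nonneg (k : Fin S.m) : 0 ≤ S.V k := by
  obtain ⟨h1, h2, h3, h4, h5, h6⟩ := S.hrect k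
  exact S.volC ⟨h1, h2.trans h3⟩ ⟨h1.trans h2, h3⟩ ⟨h4, h5.trans h6⟩ ⟨h4.trans h5, h6⟩ h2 h5

lemma f_sub {k : Fin S.m} (x₁ x₂ : ℝ) :
    S.f k x₂ - S.f k x₁ = Vol S.C x₁ x₂ (S.c k) (S.d k) / S.V k := by
  unfold f Vol; ring

lemma g_sub {k : Fin S.m} (y₁ y₂ : ℝ) :
    S.g k y₂ - S.g k y₁ = Vol S.C (S.a k) (S.b k) y₁ y₂ / S.V k := by
  unfold g Vol; ring

lemma f_a (k : Fin S.m) : S.f k (S.a k) = 0 := by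
  unfold f
  rw [show S.C (S.a k) (S.d k) - S.C (S.a k) (S.c k) - S.C (S.a k) (S.d k)
      + S.C (S.a k) (S.c k) = 0 by ring, zero_div]

lemma g_c (k : Fin S.m) : S.g k (S.c k) = 0 := by
  unfold g
  rw [show S.C (S.b k) (S.c k) - S.C (S.a k) (S.c k) - S.C (S.b k) (S.c k)
      + S.C (S.a k) (S.c k) = 0 by ring, zero_div]

lemma f_b {k : Fin S.m} (hV : 0 < S.V k) : S.f k (S.b k) = 1 := by
  unfold f
  rw [show S.C (S.b k) (S.d k) - S.C (S.b k) (S.c k) - S.C (S.a k) (S.d k)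
      + S.C (S.a k) (S.c k) = S.V k by unfold V Vol; ring]
  exact div_self hV.ne'

lemma g_d {k : Fin S.m} (hV : 0 < S.V k) : S.g k (S.d k) = 1 := by
  unfold g
  rw [show S.C (S.b k) (S.d k) - S.C (S.a k) (S.d k) - S.C (S.b k) (S.c k)
      + S.C (S.a k) (S.c k) = S.V k by unfold V Vol; ring]
  exact div_self hV.ne'

lemma f_mono {k : Fin S.m} {x₁ x₂ : ℝ} (h1 : x₁ ∈ Icc (S.a k) (S.b k))
    (h2 : x₂ ∈ Icc (S.a k) (S.b k)) (h : x₁ ≤ x₂) : S.f k x₁ ≤ S.f k x₂ := by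
  have := S.f_sub (k := k) x₁ x₂
  have hv : 0 ≤ Vol S.C x₁ x₂ (S.c k) (S.d k) := by
    obtain ⟨_, _, _, h4, h5, h6⟩ := S.hrect k
    exact S.volC (S.memx h1) (S.memx h2) ⟨h4, h5.trans h6⟩ ⟨h4.trans h5, h6⟩ h h5
  nlinarith [div_nonneg hv (S.V_nonneg k)]

lemma g_mono {k : Fin S.m} {y₁ y₂ : ℝ} (h1 : y₁ ∈ Icc (S.c k) (S.d k))
    (h2 : y₂ ∈ Icc (S.c k) (S.d k)) (h : y₁ ≤ y₂) : S.g k y₁ ≤ S.g k y₂ := by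
  have := S.g_sub (k := k) y₁ y₂
  have hv : 0 ≤ Vol S.C (S.a k) (S.b k) y₁ y₂ := by
    obtain ⟨h1', h2', h3', _, _, _⟩ := S.hrect k
    exact S.volC ⟨h1', h2'.trans h3'⟩ ⟨h1'.trans h2', h3'⟩ (S.memy h1) (S.memy h2) h2' h
  nlinarith [div_nonneg hv (S.V_nonneg k)]

lemma f_mem {k : Fin S.m} (hV : 0 < S.V k) {x : ℝ} (hx : x ∈ Icc (S.a k) (S.b k)) :
    S.f k x ∈ Icc (0:ℝ) 1 := by
  constructor
  · rw [← S.f_a k]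
    exact S.f_mono (left_mem_Icc.2 ((S.hrect k).2.1)) hx hx.1
  · rw [← S.f_b hV]
    exact S.f_mono hx (right_mem_Icc.2 ((S.hrect k).2.1)) hx.2

lemma g_mem {k : Fin S.m} (hV : 0 < S.V k) {y : ℝ} (hy : y ∈ Icc (S.c k) (S.d k)) :
    S.g k y ∈ Icc (0:ℝ) 1 := by
  constructor
  · rw [← S.g_c k]
    exact S.g_mono (left_mem_Icc.2 ((S.hrect k).2.2.2.2.1)) hy hy.1
  · rw [← S.g_d hV]
    exact S.g_mono hy (right_mem_Icc.2 ((S.hrect k).2.2.2.2.1)) hy.2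

end PW
namespace PW

variable (S : PW)

/-- Generic representation of a patchwork function on a patch, positive-volume case. -/
lemma patch_on {Qs : Fin S.m → ℝ → ℝ → ℝ} {H : ℝ → ℝ → ℝ}
    (hH : IsPatchwork S.C S.a S.b S.c S.d Qs H) {k : Fin S.m} (hV : 0 < S.V k)
    {x y : ℝ} (hx : x ∈ Icc (S.a k) (S.b k)) (hy : y ∈ Icc (S.c k) (S.d k)) :
    H x y = S.C x (S.c k) + S.C (S.a k) y - S.C (S.a k) (S.c k)
      + S.V k * Qs k (S.f k x) (S.g k y) := by
  rw [hH k x hx y hy]; unfold patchVal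
  rw [if_pos (show 0 < Vol S.C (S.a k) (S.b k) (S.c k) (S.d k) from hV)]
  rfl

/-- Generic representation, zero-volume case. -/
lemma patch_on0 {Qs : Fin S.m → ℝ → ℝ → ℝ} {H : ℝ → ℝ → ℝ}
    (hH : IsPatchwork S.C S.a S.b S.c S.d Qs H) {k : Fin S.m} (hV : ¬ 0 < S.V k)
    {x y : ℝ} (hx : x ∈ Icc (S.a k) (S.b k)) (hy : y ∈ Icc (S.c k) (S.d k)) :
    H x y = S.C x (S.c k) + S.C (S.a k) y - S.C (S.a k) (S.c k) := by
  rw [hH k x hx y hy]; unfold patchVal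
  rw [if_neg (show ¬ 0 < Vol S.C (S.a k) (S.b k) (S.c k) (S.d k) from hV)]

lemma diff_on {k : Fin S.m} (hV : 0 < S.V k)
    {x y : ℝ} (hx : x ∈ Icc (S.a k) (S.b k)) (hy : y ∈ Icc (S.c k) (S.d k)) :
    S.HQ x y - S.HP x y = S.V k * (S.Q k (S.f k x) (S.g k y) - S.P k (S.f k x) (S.g k y)) := by
  rw [S.patch_on S.hHQ hV hx hy, S.patch_on S.hHP hV hx hy]; ring

lemma diff_on0 {k : Fin S.m} (hV : ¬ 0 < S.V k)
    {x y : ℝ} (hx : x ∈ Icc (S.a k) (S.b k)) (hy : y ∈ Icc (S.c k) (S.d k)) :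
    S.HQ x y = S.HP x y := by
  rw [S.patch_on0 S.hHQ hV hx hy, S.patch_on0 S.hHP hV hx hy]

/-- `P k ≤ Q k` pointwise on the unit square. -/
lemma PleQ (k : Fin S.m) {u v : ℝ} (hu : u ∈ Icc (0:ℝ) 1) (hv : v ∈ Icc (0:ℝ) 1) :
    S.P k u v ≤ S.Q k u v := by
  have h := ((S.himp k).2.2 u u v v hu hu hv hv le_rfl le_rfl).2.2.1
  linarith

/-- `HP ≤ HQ` on the unit square. -/
lemma HPleHQ {x y : ℝ} (hx : x ∈ Icc (0:ℝ) 1) (hy : y ∈ Icc (0:ℝ) 1) :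
    S.HP x y ≤ S.HQ x y := by
  obtain ⟨k, hxk, hyk⟩ := S.hcover x hx y hy
  by_cases hV : 0 < S.V k
  · have := S.diff_on hV hxk hyk
    have hpq := S.PleQ k (S.f_mem hV hxk) (S.g_mem hV hyk)
    nlinarith
  · exact (S.diff_on0 hV hxk hyk).ge

/-- On the edges of a patch, `HP = HQ`. -/
lemma edge_eq {k : Fin S.m} {x y : ℝ} (hx : x ∈ Icc (S.a k) (S.b k))
    (hy : y ∈ Icc (S.c k) (S.d k))
    (he : x = S.a k ∨ x = S.b k ∨ y = S.c k ∨ y = S.d k) :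
    S.HQ x y = S.HP x y := by
  by_cases hV : 0 < S.V k
  · have hdiff := S.diff_on hV hx hy
    have hQP : S.Q k (S.f k x) (S.g k y) = S.P k (S.f k x) (S.g k y) := by
      have hu := S.f_mem hV hx
      have hv := S.g_mem hV hy
      have hbP := (S.hqc k).1.1
      have hbQ := (S.hqc k).2.1
      rcases he with he | he | he | he
      · rw [he, S.f_a k, (hbQ _ hv).2.1, (hbP _ hv).2.1]
      · rw [he, S.f_b hV, (hbQ _ hv).2.2.2, (hbP _ hv).2.2.2]
      · rw [he, S.g_c k, (hbQ _ hu).1, (hbP _ hu).1]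
      · rw [he, S.g_d hV, (hbQ _ hu).2.2.1, (hbP _ hu).2.2.1]
    rw [hQP] at hdiff; linarith
  · exact S.diff_on0 hV hx hy

/-- Volume identity on a patch. -/
lemma vol_on {Qs : Fin S.m → ℝ → ℝ → ℝ} {H : ℝ → ℝ → ℝ}
    (hH : IsPatchwork S.C S.a S.b S.c S.d Qs H) {k : Fin S.m} (hV : 0 < S.V k)
    {x₁ x₂ y₁ y₂ : ℝ} (h1 : x₁ ∈ Icc (S.a k) (S.b k)) (h2 : x₂ ∈ Icc (S.a k) (S.b k))
    (h3 : y₁ ∈ Icc (S.c k) (S.d k)) (h4 : y₂ ∈ Icc (S.c k) (S.d k)) :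
    Vol H x₁ x₂ y₁ y₂
      = S.V k * Vol (Qs k) (S.f k x₁) (S.f k x₂) (S.g k y₁) (S.g k y₂) := by
  unfold Vol
  rw [S.patch_on hH hV h1 h3, S.patch_on hH hV h2 h4, S.patch_on hH hV h1 h4,
    S.patch_on hH hV h2 h3]
  ring

/-- The four local (within one patch) imprecise-copula inequalities. -/
lemma loc_ineq {k : Fin S.m} {x₁ x₂ y₁ y₂ : ℝ}
    (h1 : x₁ ∈ Icc (S.a k) (S.b k)) (h2 : x₂ ∈ Icc (S.a k) (S.b k))
    (h3 : y₁ ∈ Icc (S.c k) (S.d k)) (h4 : y₂ ∈ Icc (S.c k) (S.d k))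
    (hx : x₁ ≤ x₂) (hy : y₁ ≤ y₂) :
    0 ≤ S.HQ x₁ y₁ + S.HP x₂ y₂ - S.HP x₁ y₂ - S.HP x₂ y₁ ∧
    0 ≤ S.HP x₁ y₁ + S.HQ x₂ y₂ - S.HP x₁ y₂ - S.HP x₂ y₁ ∧
    0 ≤ S.HQ x₁ y₁ + S.HQ x₂ y₂ - S.HQ x₁ y₂ - S.HP x₂ y₁ ∧
    0 ≤ S.HQ x₁ y₁ + S.HQ x₂ y₂ - S.HP x₁ y₂ - S.HQ x₂ y₁ := by
  by_cases hV : 0 < S.V k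
  · have h := (S.himp k).2.2 (S.f k x₁) (S.f k x₂) (S.g k y₁) (S.g k y₂)
      (S.f_mem hV h1) (S.f_mem hV h2) (S.g_mem hV h3) (S.g_mem hV h4)
      (S.f_mono h1 h2 hx) (S.g_mono h3 h4 hy)
    have e11P := S.patch_on S.hHP hV h1 h3
    have e22P := S.patch_on S.hHP hV h2 h4
    have e12P := S.patch_on S.hHP hV h1 h4
    have e21P := S.patch_on S.hHP hV h2 h3
    have e11Q := S.patch_on S.hHQ hV h1 h3
    have e22Q := S.patch_on S.hHQ hV h2 h4
    have e12Q := S.patch_on S.hHQ hV h1 h4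
    have e21Q := S.patch_on S.hHQ hV h2 h3
    obtain ⟨i1, i2, i3, i4⟩ := h
    exact ⟨by linarith [mul_nonneg hV.le i1], by linarith [mul_nonneg hV.le i2],
      by linarith [mul_nonneg hV.le i3], by linarith [mul_nonneg hV.le i4]⟩
  · have e11P := S.patch_on0 S.hHP hV h1 h3
    have e22P := S.patch_on0 S.hHP hV h2 h4
    have e12P := S.patch_on0 S.hHP hV h1 h4
    have e21P := S.patch_on0 S.hHP hV h2 h3
    have e11Q := S.patch_on0 S.hHQ hV h1 h3
    have e22Q := S.patch_on0 S.hHQ hV h2 h4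
    have e12Q := S.patch_on0 S.hHQ hV h1 h4
    have e21Q := S.patch_on0 S.hHQ hV h2 h3
    exact ⟨by linarith, by linarith, by linarith, by linarith⟩

end PW
namespace PW

variable (S : PW)

lemma exists_patch_infinite (u v : ℕ → ℝ) (hu : ∀ n, u n ∈ Icc (0:ℝ) 1)
    (hv : ∀ n, v n ∈ Icc (0:ℝ) 1) :
    ∃ k, {n : ℕ | u n ∈ Icc (S.a k) (S.b k) ∧ v n ∈ Icc (S.c k) (S.d k)}.Infinite := by
  by_contra h
  push_neg at h
  have hsub : (Set.univ : Set ℕ) ⊆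
      ⋃ k, {n : ℕ | u n ∈ Icc (S.a k) (S.b k) ∧ v n ∈ Icc (S.c k) (S.d k)} := by
    intro n _
    obtain ⟨k, hk1, hk2⟩ := S.hcover (u n) (hu n) (v n) (hv n)
    exact Set.mem_iUnion.2 ⟨k, hk1, hk2⟩
  exact Set.infinite_univ ((Set.finite_iUnion h).subset hsub)

lemma one_div_small {T : Set ℕ} (hT : T.Infinite) {e : ℝ} (he : 0 < e) :
    ∃ n ∈ T, 1 / ((n : ℝ) + 1) < e := by
  obtain ⟨N, hN⟩ := exists_nat_one_div_lt he
  obtain ⟨n, hnT, hn⟩ := hT.exists_gt N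
  refine ⟨n, hnT, lt_of_le_of_lt ?_ hN⟩
  apply one_div_le_one_div_of_le (by positivity)
  have : (N : ℝ) ≤ (n : ℝ) := by exact_mod_cast hn.le
  linarith

/-- Find a patch containing a corner with room in prescribed directions. -/
lemma exists_patch_corner {x y : ℝ} (hx : x ∈ Icc (0:ℝ) 1) (hy : y ∈ Icc (0:ℝ) 1)
    (sx sy : Bool) (hsx : sx = true → x < 1) (hsx' : sx = false → 0 < x)
    (hsy : sy = true → y < 1) (hsy' : sy = false → 0 < y) :
    ∃ k, x ∈ Icc (S.a k) (S.b k) ∧ y ∈ Icc (S.c k) (S.d k) ∧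
      (sx = true → x < S.b k) ∧ (sx = false → S.a k < x) ∧
      (sy = true → y < S.d k) ∧ (sy = false → S.c k < y) := by
  set u : ℕ → ℝ := fun n =>
    if sx then x + min (1 - x) (1 / ((n : ℝ) + 1)) else x - min x (1 / ((n : ℝ) + 1)) with hu_def
  set v : ℕ → ℝ := fun n =>
    if sy then y + min (1 - y) (1 / ((n : ℝ) + 1)) else y - min y (1 / ((n : ℝ) + 1)) with hv_def
  have hpos : ∀ n : ℕ, (0:ℝ) < 1 / ((n : ℝ) + 1) := fun n => by positivity
  have hu_mem : ∀ n, u n ∈ Icc (0:ℝ) 1 := by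
    intro n
    simp only [hu_def]
    rcases sx with _ | _ <;> simp only [if_true, if_false, Bool.false_eq_true] <;>
      constructor
    · have := min_le_left x (1 / ((n : ℝ) + 1)); linarith [hx.1]
    · have : 0 ≤ min x (1 / ((n : ℝ) + 1)) := le_min hx.1 (hpos n).le
      linarith [hx.2]
    · have : 0 ≤ min (1 - x) (1 / ((n : ℝ) + 1)) := le_min (by linarith [hx.2]) (hpos n).le
      linarith [hx.1]
    · have := min_le_left (1 - x) (1 / ((n : ℝ) + 1)); linarith
  have hv_mem : ∀ n, v n ∈ Icc (0:ℝ) 1 := by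
    intro n
    simp only [hv_def]
    rcases sy with _ | _ <;> simp only [if_true, if_false, Bool.false_eq_true] <;>
      constructor
    · have := min_le_left y (1 / ((n : ℝ) + 1)); linarith [hy.1]
    · have : 0 ≤ min y (1 / ((n : ℝ) + 1)) := le_min hy.1 (hpos n).le
      linarith [hy.2]
    · have : 0 ≤ min (1 - y) (1 / ((n : ℝ) + 1)) := le_min (by linarith [hy.2]) (hpos n).le
      linarith [hy.1]
    · have := min_le_left (1 - y) (1 / ((n : ℝ) + 1)); linarith
  have hu_close : ∀ n, |u n - x| ≤ 1 / ((n : ℝ) + 1) := by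
    intro n
    simp only [hu_def]
    rcases sx with _ | _ <;> simp only [if_true, if_false, Bool.false_eq_true]
    · rw [abs_le]
      have h1 := min_le_right x (1 / ((n : ℝ) + 1))
      have h2 : 0 ≤ min x (1 / ((n : ℝ) + 1)) := le_min hx.1 (hpos n).le
      constructor <;> linarith [hpos n]
    · rw [abs_le]
      have h1 := min_le_right (1 - x) (1 / ((n : ℝ) + 1))
      have h2 : 0 ≤ min (1 - x) (1 / ((n : ℝ) + 1)) := le_min (by linarith [hx.2]) (hpos n).le
      constructor <;> linarith [hpos n]
  have hv_close : ∀ n, |v n - y| ≤ 1 / ((n : ℝ) + 1) := by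
    intro n
    simp only [hv_def]
    rcases sy with _ | _ <;> simp only [if_true, if_false, Bool.false_eq_true]
    · rw [abs_le]
      have h1 := min_le_right y (1 / ((n : ℝ) + 1))
      have h2 : 0 ≤ min y (1 / ((n : ℝ) + 1)) := le_min hy.1 (hpos n).le
      constructor <;> linarith [hpos n]
    · rw [abs_le]
      have h1 := min_le_right (1 - y) (1 / ((n : ℝ) + 1))
      have h2 : 0 ≤ min (1 - y) (1 / ((n : ℝ) + 1)) := le_min (by linarith [hy.2]) (hpos n).le
      constructor <;> linarith [hpos n]
  obtain ⟨k, hk⟩ := S.exists_patch_infinite u v hu_mem hv_mem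
  set T := {n : ℕ | u n ∈ Icc (S.a k) (S.b k) ∧ v n ∈ Icc (S.c k) (S.d k)} with hT_def
  have hax : S.a k ≤ x := by
    by_contra hax
    push_neg at hax
    obtain ⟨n, hnT, hn⟩ := one_div_small hk (show (0:ℝ) < S.a k - x by linarith)
    have h1 := hnT.1.1
    have h2 := (abs_le.1 (hu_close n)).2
    linarith
  have hxb : x ≤ S.b k := by
    by_contra hxb
    push_neg at hxb
    obtain ⟨n, hnT, hn⟩ := one_div_small hk (show (0:ℝ) < x - S.b k by linarith)
    have h1 := hnT.1.2
    have h2 := (abs_le.1 (hu_close n)).1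
    linarith
  have hcy : S.c k ≤ y := by
    by_contra hcy
    push_neg at hcy
    obtain ⟨n, hnT, hn⟩ := one_div_small hk (show (0:ℝ) < S.c k - y by linarith)
    have h1 := hnT.2.1
    have h2 := (abs_le.1 (hv_close n)).2
    linarith
  have hyd : y ≤ S.d k := by
    by_contra hyd
    push_neg at hyd
    obtain ⟨n, hnT, hn⟩ := one_div_small hk (show (0:ℝ) < y - S.d k by linarith)
    have h1 := hnT.2.2
    have h2 := (abs_le.1 (hv_close n)).1
    linarith
  obtain ⟨n, hnT⟩ := hk.nonempty
  refine ⟨k, ⟨hax, hxb⟩, ⟨hcy, hyd⟩, ?_, ?_, ?_, ?_⟩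
  · intro hsxt
    have h1 : x < u n := by
      simp only [hu_def, hsxt, if_true]
      have : 0 < min (1 - x) (1 / ((n : ℝ) + 1)) := lt_min (by linarith [hsx hsxt]) (hpos n)
      linarith
    exact h1.trans_le hnT.1.2
  · intro hsxf
    have h1 : u n < x := by
      simp only [hu_def, hsxf, Bool.false_eq_true, if_false]
      have : 0 < min x (1 / ((n : ℝ) + 1)) := lt_min (hsx' hsxf) (hpos n)
      linarith
    exact lt_of_le_of_lt hnT.1.1 h1
  · intro hsyt
    have h1 : y < v n := by
      simp only [hv_def, hsyt, if_true]
      have : 0 < min (1 - y) (1 / ((n : ℝ) + 1)) := lt_min (by linarith [hsy hsyt]) (hpos n)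
      linarith
    exact h1.trans_le hnT.2.2
  · intro hsyf
    have h1 : v n < y := by
      simp only [hv_def, hsyf, Bool.false_eq_true, if_false]
      have : 0 < min y (1 / ((n : ℝ) + 1)) := lt_min (hsy' hsyf) (hpos n)
      linarith
    exact lt_of_le_of_lt hnT.2.1 h1

end PW
namespace PW

variable (S : PW)

/-- Measure: number of rectangle-edge coordinates strictly inside the intervals. -/
noncomputable def cnt (x₁ x₂ y₁ y₂ : ℝ) : ℕ :=
  {k : Fin S.m | S.a k ∈ Ioo x₁ x₂}.ncard + {k : Fin S.m | S.b k ∈ Ioo x₁ x₂}.ncard +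
  {k : Fin S.m | S.c k ∈ Ioo y₁ y₂}.ncard + {k : Fin S.m | S.d k ∈ Ioo y₁ y₂}.ncard

lemma cnt_lt_of {x₁ x₂ y₁ y₂ x₁' x₂' y₁' y₂' : ℝ}
    (hx : Ioo x₁' x₂' ⊆ Ioo x₁ x₂) (hy : Ioo y₁' y₂' ⊆ Ioo y₁ y₂)
    (hw : ({k : Fin S.m | S.a k ∈ Ioo x₁' x₂'} ⊂ {k : Fin S.m | S.a k ∈ Ioo x₁ x₂}) ∨
          ({k : Fin S.m | S.b k ∈ Ioo x₁' x₂'} ⊂ {k : Fin S.m | S.b k ∈ Ioo x₁ x₂}) ∨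
          ({k : Fin S.m | S.c k ∈ Ioo y₁' y₂'} ⊂ {k : Fin S.m | S.c k ∈ Ioo y₁ y₂}) ∨
          ({k : Fin S.m | S.d k ∈ Ioo y₁' y₂'} ⊂ {k : Fin S.m | S.d k ∈ Ioo y₁ y₂})) :
    S.cnt x₁' x₂' y₁' y₂' < S.cnt x₁ x₂ y₁ y₂ := by
  have la : {k : Fin S.m | S.a k ∈ Ioo x₁' x₂'}.ncard ≤
      {k : Fin S.m | S.a k ∈ Ioo x₁ x₂}.ncard :=
    Set.ncard_le_ncard (fun j hj => hx hj) (Set.toFinite _)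
  have lb : {k : Fin S.m | S.b k ∈ Ioo x₁' x₂'}.ncard ≤
      {k : Fin S.m | S.b k ∈ Ioo x₁ x₂}.ncard :=
    Set.ncard_le_ncard (fun j hj => hx hj) (Set.toFinite _)
  have lc : {k : Fin S.m | S.c k ∈ Ioo y₁' y₂'}.ncard ≤
      {k : Fin S.m | S.c k ∈ Ioo y₁ y₂}.ncard :=
    Set.ncard_le_ncard (fun j hj => hy hj) (Set.toFinite _)
  have ld : {k : Fin S.m | S.d k ∈ Ioo y₁' y₂'}.ncard ≤
      {k : Fin S.m | S.d k ∈ Ioo y₁ y₂}.ncard :=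
    Set.ncard_le_ncard (fun j hj => hy hj) (Set.toFinite _)
  unfold cnt
  rcases hw with hw | hw | hw | hw <;>
    have := Set.ncard_lt_ncard hw (Set.toFinite _) <;> omega

end PW
namespace PW

variable (S : PW)

lemma b_mem_patch (k : Fin S.m) : S.b k ∈ Icc (S.a k) (S.b k) :=
  right_mem_Icc.2 (S.hrect k).2.1
lemma a_mem_patch (k : Fin S.m) : S.a k ∈ Icc (S.a k) (S.b k) :=
  left_mem_Icc.2 (S.hrect k).2.1
lemma d_mem_patch (k : Fin S.m) : S.d k ∈ Icc (S.c k) (S.d k) :=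
  right_mem_Icc.2 (S.hrect k).2.2.2.2.1
lemma c_mem_patch (k : Fin S.m) : S.c k ∈ Icc (S.c k) (S.d k) :=
  left_mem_Icc.2 (S.hrect k).2.2.2.2.1

/-- The four imprecise-copula inequalities for the patchwork pair, by induction on the
number of rectangle edges crossing the given rectangle. -/
lemma main_ineqs : ∀ n : ℕ, ∀ x₁ x₂ y₁ y₂ : ℝ, x₁ ∈ Icc (0:ℝ) 1 → x₂ ∈ Icc (0:ℝ) 1 →
    y₁ ∈ Icc (0:ℝ) 1 → y₂ ∈ Icc (0:ℝ) 1 → x₁ ≤ x₂ → y₁ ≤ y₂ → S.cnt x₁ x₂ y₁ y₂ ≤ n →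
    0 ≤ S.HQ x₁ y₁ + S.HP x₂ y₂ - S.HP x₁ y₂ - S.HP x₂ y₁ ∧
    0 ≤ S.HP x₁ y₁ + S.HQ x₂ y₂ - S.HP x₁ y₂ - S.HP x₂ y₁ ∧
    0 ≤ S.HQ x₁ y₁ + S.HQ x₂ y₂ - S.HQ x₁ y₂ - S.HP x₂ y₁ ∧
    0 ≤ S.HQ x₁ y₁ + S.HQ x₂ y₂ - S.HP x₁ y₂ - S.HQ x₂ y₁ := by
  intro n
  induction n using Nat.strong_induction_on with
  | _ n IH =>
  intro x₁ x₂ y₁ y₂ hx₁ hx₂ hy₁ hy₂ hx12 hy12 hcnt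
  have hg11 := S.HPleHQ hx₁ hy₁
  have hg12 := S.HPleHQ hx₁ hy₂
  have hg21 := S.HPleHQ hx₂ hy₁
  have hg22 := S.HPleHQ hx₂ hy₂
  rcases eq_or_lt_of_le hx12 with heq | hxlt
  · subst heq
    exact ⟨by linarith, by linarith, by linarith, by linarith⟩
  rcases eq_or_lt_of_le hy12 with heq | hylt
  · subst heq
    exact ⟨by linarith, by linarith, by linarith, by linarith⟩
  refine ⟨?_, ?_, ?_, ?_⟩
  -- ① corner (x₁,y₁)
  · obtain ⟨k, hxk, hyk, hbk, -, hdk, -⟩ := S.exists_patch_corner hx₁ hy₁ true true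
      (fun _ => lt_of_lt_of_le hxlt hx₂.2) (by simp)
      (fun _ => lt_of_lt_of_le hylt hy₂.2) (by simp)
    have hbk := hbk rfl
    have hdk := hdk rfl
    set xs := min x₂ (S.b k) with hxs_def
    set ys := min y₂ (S.d k) with hys_def
    have hxs1 : x₁ ≤ xs := le_min hxlt.le hbk.le
    have hxs2 : xs ≤ x₂ := min_le_left _ _
    have hxsp : xs ∈ Icc (S.a k) (S.b k) := ⟨hxk.1.trans hxs1, min_le_right _ _⟩
    have hxsm : xs ∈ Icc (0:ℝ) 1 := S.memx hxsp
    have hys1 : y₁ ≤ ys := le_min hylt.le hdk.le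
    have hys2 : ys ≤ y₂ := min_le_left _ _
    have hysp : ys ∈ Icc (S.c k) (S.d k) := ⟨hyk.1.trans hys1, min_le_right _ _⟩
    have hysm : ys ∈ Icc (0:ℝ) 1 := S.memy hysp
    have hdec : S.HQ x₁ y₁ + S.HP x₂ y₂ - S.HP x₁ y₂ - S.HP x₂ y₁
        = (S.HQ x₁ y₁ + S.HP xs ys - S.HP x₁ ys - S.HP xs y₁)
          + Vol S.HP xs x₂ y₁ y₂ + Vol S.HP x₁ xs ys y₂ := by unfold Vol; ring
    have t1 := (S.loc_ineq hxk hxsp hyk hysp hxs1 hys1).1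
    have t2 : 0 ≤ Vol S.HP xs x₂ y₁ y₂ := by
      rcases le_or_gt x₂ (S.b k) with hc | hc
      · rw [hxs_def, min_eq_left hc]
        exact le_of_eq (by unfold Vol; ring)
      · have hxs_eq : xs = S.b k := min_eq_right hc.le
        have hedge : S.HQ (S.b k) y₁ = S.HP (S.b k) y₁ :=
          S.edge_eq (S.b_mem_patch k) hyk (Or.inr (Or.inl rfl))
        have hsub : {j : Fin S.m | S.b j ∈ Ioo (S.b k) x₂} ⊆
            {j : Fin S.m | S.b j ∈ Ioo x₁ x₂} :=
          fun j hj => Ioo_subset_Ioo hbk.le le_rfl hj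
        have hss : {j : Fin S.m | S.b j ∈ Ioo (S.b k) x₂} ⊂
            {j : Fin S.m | S.b j ∈ Ioo x₁ x₂} := by
          refine (Set.ssubset_iff_of_subset hsub).2 ⟨k, ?_, ?_⟩
          · simp only [Set.mem_setOf_eq, Set.mem_Ioo]
            exact ⟨hbk, hc⟩
          · simp only [Set.mem_setOf_eq, Set.mem_Ioo]
            exact fun hmem => lt_irrefl _ hmem.1
        have hlt : S.cnt (S.b k) x₂ y₁ y₂ < S.cnt x₁ x₂ y₁ y₂ := S.cnt_lt_of (Ioo_subset_Ioo hbk.le le_rfl) (Set.Subset.refl (Ioo y₁ y₂))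
          (Or.inr (Or.inl hss))
        have hIH := (IH (S.cnt (S.b k) x₂ y₁ y₂) (lt_of_lt_of_le hlt hcnt) (S.b k) x₂ y₁ y₂
          (S.memx (S.b_mem_patch k)) hx₂ hy₁ hy₂ hc.le hy12 le_rfl).1
        rw [hxs_eq]; unfold Vol; linarith
    have t3 : 0 ≤ Vol S.HP x₁ xs ys y₂ := by
      rcases le_or_gt y₂ (S.d k) with hc | hc
      · rw [hys_def, min_eq_left hc]
        exact le_of_eq (by unfold Vol; ring)
      · have hys_eq : ys = S.d k := min_eq_right hc.le
        have hedge : S.HQ x₁ (S.d k) = S.HP x₁ (S.d k) :=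
          S.edge_eq hxk (S.d_mem_patch k) (Or.inr (Or.inr (Or.inr rfl)))
        have hsub : {j : Fin S.m | S.d j ∈ Ioo (S.d k) y₂} ⊆
            {j : Fin S.m | S.d j ∈ Ioo y₁ y₂} :=
          fun j hj => Ioo_subset_Ioo hdk.le le_rfl hj
        have hss : {j : Fin S.m | S.d j ∈ Ioo (S.d k) y₂} ⊂
            {j : Fin S.m | S.d j ∈ Ioo y₁ y₂} := by
          refine (Set.ssubset_iff_of_subset hsub).2 ⟨k, ?_, ?_⟩
          · simp only [Set.mem_setOf_eq, Set.mem_Ioo]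
            exact ⟨hdk, hc⟩
          · simp only [Set.mem_setOf_eq, Set.mem_Ioo]
            exact fun hmem => lt_irrefl _ hmem.1
        have hlt : S.cnt x₁ xs (S.d k) y₂ < S.cnt x₁ x₂ y₁ y₂ := S.cnt_lt_of (Ioo_subset_Ioo le_rfl hxs2) (Ioo_subset_Ioo hdk.le le_rfl)
          (Or.inr (Or.inr (Or.inr hss)))
        have hIH := (IH (S.cnt x₁ xs (S.d k) y₂) (lt_of_lt_of_le hlt hcnt) x₁ xs (S.d k) y₂
          hx₁ hxsm (S.memy (S.d_mem_patch k)) hy₂ hxs1 hc.le le_rfl).1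
        rw [hys_eq]; unfold Vol; linarith
    linarith
  -- ② corner (x₂,y₂)
  · obtain ⟨k, hxk, hyk, -, hak, -, hck⟩ := S.exists_patch_corner hx₂ hy₂ false false
      (by simp) (fun _ => lt_of_le_of_lt hx₁.1 hxlt)
      (by simp) (fun _ => lt_of_le_of_lt hy₁.1 hylt)
    have hak := hak rfl
    have hck := hck rfl
    set xs := max x₁ (S.a k) with hxs_def
    set ys := max y₁ (S.c k) with hys_def
    have hxs1 : x₁ ≤ xs := le_max_left _ _
    have hxs2 : xs ≤ x₂ := max_le hxlt.le hak.le
    have hxsp : xs ∈ Icc (S.a k) (S.b k) := ⟨le_max_right _ _, hxs2.trans hxk.2⟩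
    have hxsm : xs ∈ Icc (0:ℝ) 1 := S.memx hxsp
    have hys1 : y₁ ≤ ys := le_max_left _ _
    have hys2 : ys ≤ y₂ := max_le hylt.le hck.le
    have hysp : ys ∈ Icc (S.c k) (S.d k) := ⟨le_max_right _ _, hys2.trans hyk.2⟩
    have hysm : ys ∈ Icc (0:ℝ) 1 := S.memy hysp
    have hdec : S.HP x₁ y₁ + S.HQ x₂ y₂ - S.HP x₁ y₂ - S.HP x₂ y₁
        = (S.HP xs ys + S.HQ x₂ y₂ - S.HP xs y₂ - S.HP x₂ ys)
          + Vol S.HP x₁ xs y₁ y₂ + Vol S.HP xs x₂ y₁ ys := by unfold Vol; ring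
    have t1 := (S.loc_ineq hxsp hxk hysp hyk hxs2 hys2).2.1
    have t2 : 0 ≤ Vol S.HP x₁ xs y₁ y₂ := by
      rcases le_or_gt (S.a k) x₁ with hc | hc
      · rw [hxs_def, max_eq_left hc]
        exact le_of_eq (by unfold Vol; ring)
      · have hxs_eq : xs = S.a k := max_eq_right hc.le
        have hedge : S.HQ (S.a k) y₂ = S.HP (S.a k) y₂ :=
          S.edge_eq (S.a_mem_patch k) hyk (Or.inl rfl)
        have hsub : {j : Fin S.m | S.a j ∈ Ioo x₁ (S.a k)} ⊆
            {j : Fin S.m | S.a j ∈ Ioo x₁ x₂} :=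
          fun j hj => Ioo_subset_Ioo le_rfl hak.le hj
        have hss : {j : Fin S.m | S.a j ∈ Ioo x₁ (S.a k)} ⊂
            {j : Fin S.m | S.a j ∈ Ioo x₁ x₂} := by
          refine (Set.ssubset_iff_of_subset hsub).2 ⟨k, ?_, ?_⟩
          · simp only [Set.mem_setOf_eq, Set.mem_Ioo]
            exact ⟨hc, hak⟩
          · simp only [Set.mem_setOf_eq, Set.mem_Ioo]
            exact fun hmem => lt_irrefl _ hmem.2
        have hlt : S.cnt x₁ (S.a k) y₁ y₂ < S.cnt x₁ x₂ y₁ y₂ := S.cnt_lt_of (Ioo_subset_Ioo le_rfl hak.le) (Set.Subset.refl (Ioo y₁ y₂)) (Or.inl hss)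
        have hIH := (IH (S.cnt x₁ (S.a k) y₁ y₂) (lt_of_lt_of_le hlt hcnt) x₁ (S.a k) y₁ y₂
          hx₁ (S.memx (S.a_mem_patch k)) hy₁ hy₂ hc.le hy12 le_rfl).2.1
        rw [hxs_eq]; unfold Vol; linarith
    have t3 : 0 ≤ Vol S.HP xs x₂ y₁ ys := by
      rcases le_or_gt (S.c k) y₁ with hc | hc
      · rw [hys_def, max_eq_left hc]
        exact le_of_eq (by unfold Vol; ring)
      · have hys_eq : ys = S.c k := max_eq_right hc.le
        have hedge : S.HQ x₂ (S.c k) = S.HP x₂ (S.c k) :=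
          S.edge_eq hxk (S.c_mem_patch k) (Or.inr (Or.inr (Or.inl rfl)))
        have hsub : {j : Fin S.m | S.c j ∈ Ioo y₁ (S.c k)} ⊆
            {j : Fin S.m | S.c j ∈ Ioo y₁ y₂} :=
          fun j hj => Ioo_subset_Ioo le_rfl hck.le hj
        have hss : {j : Fin S.m | S.c j ∈ Ioo y₁ (S.c k)} ⊂
            {j : Fin S.m | S.c j ∈ Ioo y₁ y₂} := by
          refine (Set.ssubset_iff_of_subset hsub).2 ⟨k, ?_, ?_⟩
          · simp only [Set.mem_setOf_eq, Set.mem_Ioo]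
            exact ⟨hc, hck⟩
          · simp only [Set.mem_setOf_eq, Set.mem_Ioo]
            exact fun hmem => lt_irrefl _ hmem.2
        have hlt : S.cnt xs x₂ y₁ (S.c k) < S.cnt x₁ x₂ y₁ y₂ := S.cnt_lt_of (Ioo_subset_Ioo hxs1 le_rfl) (Ioo_subset_Ioo le_rfl hck.le)
          (Or.inr (Or.inr (Or.inl hss)))
        have hIH := (IH (S.cnt xs x₂ y₁ (S.c k)) (lt_of_lt_of_le hlt hcnt) xs x₂ y₁ (S.c k)
          hxsm hx₂ hy₁ (S.memy (S.c_mem_patch k)) hxs2 hc.le le_rfl).2.1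
        rw [hys_eq]; unfold Vol; linarith
    linarith
  -- ③ corner (x₂,y₁)
  · obtain ⟨k, hxk, hyk, -, hak, hdk, -⟩ := S.exists_patch_corner hx₂ hy₁ false true
      (by simp) (fun _ => lt_of_le_of_lt hx₁.1 hxlt)
      (fun _ => lt_of_lt_of_le hylt hy₂.2) (by simp)
    have hak := hak rfl
    have hdk := hdk rfl
    set xs := max x₁ (S.a k) with hxs_def
    set ys := min y₂ (S.d k) with hys_def
    have hxs1 : x₁ ≤ xs := le_max_left _ _
    have hxs2 : xs ≤ x₂ := max_le hxlt.le hak.le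
    have hxsp : xs ∈ Icc (S.a k) (S.b k) := ⟨le_max_right _ _, hxs2.trans hxk.2⟩
    have hxsm : xs ∈ Icc (0:ℝ) 1 := S.memx hxsp
    have hys1 : y₁ ≤ ys := le_min hylt.le hdk.le
    have hys2 : ys ≤ y₂ := min_le_left _ _
    have hysp : ys ∈ Icc (S.c k) (S.d k) := ⟨hyk.1.trans hys1, min_le_right _ _⟩
    have hysm : ys ∈ Icc (0:ℝ) 1 := S.memy hysp
    have hdec : S.HQ x₁ y₁ + S.HQ x₂ y₂ - S.HQ x₁ y₂ - S.HP x₂ y₁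
        = (S.HQ xs y₁ + S.HQ x₂ ys - S.HQ xs ys - S.HP x₂ y₁)
          + Vol S.HQ x₁ xs y₁ y₂ + Vol S.HQ xs x₂ ys y₂ := by unfold Vol; ring
    have t1 := (S.loc_ineq hxsp hxk hyk hysp hxs2 hys1).2.2.1
    have t2 : 0 ≤ Vol S.HQ x₁ xs y₁ y₂ := by
      rcases le_or_gt (S.a k) x₁ with hc | hc
      · rw [hxs_def, max_eq_left hc]
        exact le_of_eq (by unfold Vol; ring)
      · have hxs_eq : xs = S.a k := max_eq_right hc.le
        have hedge : S.HQ (S.a k) y₁ = S.HP (S.a k) y₁ :=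
          S.edge_eq (S.a_mem_patch k) hyk (Or.inl rfl)
        have hsub : {j : Fin S.m | S.a j ∈ Ioo x₁ (S.a k)} ⊆
            {j : Fin S.m | S.a j ∈ Ioo x₁ x₂} :=
          fun j hj => Ioo_subset_Ioo le_rfl hak.le hj
        have hss : {j : Fin S.m | S.a j ∈ Ioo x₁ (S.a k)} ⊂
            {j : Fin S.m | S.a j ∈ Ioo x₁ x₂} := by
          refine (Set.ssubset_iff_of_subset hsub).2 ⟨k, ?_, ?_⟩
          · simp only [Set.mem_setOf_eq, Set.mem_Ioo]
            exact ⟨hc, hak⟩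
          · simp only [Set.mem_setOf_eq, Set.mem_Ioo]
            exact fun hmem => lt_irrefl _ hmem.2
        have hlt : S.cnt x₁ (S.a k) y₁ y₂ < S.cnt x₁ x₂ y₁ y₂ := S.cnt_lt_of (Ioo_subset_Ioo le_rfl hak.le) (Set.Subset.refl (Ioo y₁ y₂)) (Or.inl hss)
        have hIH := (IH (S.cnt x₁ (S.a k) y₁ y₂) (lt_of_lt_of_le hlt hcnt) x₁ (S.a k) y₁ y₂
          hx₁ (S.memx (S.a_mem_patch k)) hy₁ hy₂ hc.le hy12 le_rfl).2.2.1
        rw [hxs_eq]; unfold Vol; linarith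
    have t3 : 0 ≤ Vol S.HQ xs x₂ ys y₂ := by
      rcases le_or_gt y₂ (S.d k) with hc | hc
      · rw [hys_def, min_eq_left hc]
        exact le_of_eq (by unfold Vol; ring)
      · have hys_eq : ys = S.d k := min_eq_right hc.le
        have hedge : S.HQ x₂ (S.d k) = S.HP x₂ (S.d k) :=
          S.edge_eq hxk (S.d_mem_patch k) (Or.inr (Or.inr (Or.inr rfl)))
        have hsub : {j : Fin S.m | S.d j ∈ Ioo (S.d k) y₂} ⊆
            {j : Fin S.m | S.d j ∈ Ioo y₁ y₂} :=
          fun j hj => Ioo_subset_Ioo hdk.le le_rfl hj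
        have hss : {j : Fin S.m | S.d j ∈ Ioo (S.d k) y₂} ⊂
            {j : Fin S.m | S.d j ∈ Ioo y₁ y₂} := by
          refine (Set.ssubset_iff_of_subset hsub).2 ⟨k, ?_, ?_⟩
          · simp only [Set.mem_setOf_eq, Set.mem_Ioo]
            exact ⟨hdk, hc⟩
          · simp only [Set.mem_setOf_eq, Set.mem_Ioo]
            exact fun hmem => lt_irrefl _ hmem.1
        have hlt : S.cnt xs x₂ (S.d k) y₂ < S.cnt x₁ x₂ y₁ y₂ := S.cnt_lt_of (Ioo_subset_Ioo hxs1 le_rfl) (Ioo_subset_Ioo hdk.le le_rfl)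
          (Or.inr (Or.inr (Or.inr hss)))
        have hIH := (IH (S.cnt xs x₂ (S.d k) y₂) (lt_of_lt_of_le hlt hcnt) xs x₂ (S.d k) y₂
          hxsm hx₂ (S.memy (S.d_mem_patch k)) hy₂ hxs2 hc.le le_rfl).2.2.1
        rw [hys_eq]; unfold Vol; linarith
    linarith
  -- ④ corner (x₁,y₂)
  · obtain ⟨k, hxk, hyk, hbk, -, -, hck⟩ := S.exists_patch_corner hx₁ hy₂ true false
      (fun _ => lt_of_lt_of_le hxlt hx₂.2) (by simp)
      (by simp) (fun _ => lt_of_le_of_lt hy₁.1 hylt)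
    have hbk := hbk rfl
    have hck := hck rfl
    set xs := min x₂ (S.b k) with hxs_def
    set ys := max y₁ (S.c k) with hys_def
    have hxs1 : x₁ ≤ xs := le_min hxlt.le hbk.le
    have hxs2 : xs ≤ x₂ := min_le_left _ _
    have hxsp : xs ∈ Icc (S.a k) (S.b k) := ⟨hxk.1.trans hxs1, min_le_right _ _⟩
    have hxsm : xs ∈ Icc (0:ℝ) 1 := S.memx hxsp
    have hys1 : y₁ ≤ ys := le_max_left _ _
    have hys2 : ys ≤ y₂ := max_le hylt.le hck.le
    have hysp : ys ∈ Icc (S.c k) (S.d k) := ⟨le_max_right _ _, hys2.trans hyk.2⟩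
    have hysm : ys ∈ Icc (0:ℝ) 1 := S.memy hysp
    have hdec : S.HQ x₁ y₁ + S.HQ x₂ y₂ - S.HP x₁ y₂ - S.HQ x₂ y₁
        = (S.HQ x₁ ys + S.HQ xs y₂ - S.HP x₁ y₂ - S.HQ xs ys)
          + Vol S.HQ xs x₂ y₁ y₂ + Vol S.HQ x₁ xs y₁ ys := by unfold Vol; ring
    have t1 := (S.loc_ineq hxk hxsp hysp hyk hxs1 hys2).2.2.2
    have t2 : 0 ≤ Vol S.HQ xs x₂ y₁ y₂ := by
      rcases le_or_gt x₂ (S.b k) with hc | hc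
      · rw [hxs_def, min_eq_left hc]
        exact le_of_eq (by unfold Vol; ring)
      · have hxs_eq : xs = S.b k := min_eq_right hc.le
        have hedge : S.HQ (S.b k) y₂ = S.HP (S.b k) y₂ :=
          S.edge_eq (S.b_mem_patch k) hyk (Or.inr (Or.inl rfl))
        have hsub : {j : Fin S.m | S.b j ∈ Ioo (S.b k) x₂} ⊆
            {j : Fin S.m | S.b j ∈ Ioo x₁ x₂} :=
          fun j hj => Ioo_subset_Ioo hbk.le le_rfl hj
        have hss : {j : Fin S.m | S.b j ∈ Ioo (S.b k) x₂} ⊂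
            {j : Fin S.m | S.b j ∈ Ioo x₁ x₂} := by
          refine (Set.ssubset_iff_of_subset hsub).2 ⟨k, ?_, ?_⟩
          · simp only [Set.mem_setOf_eq, Set.mem_Ioo]
            exact ⟨hbk, hc⟩
          · simp only [Set.mem_setOf_eq, Set.mem_Ioo]
            exact fun hmem => lt_irrefl _ hmem.1
        have hlt : S.cnt (S.b k) x₂ y₁ y₂ < S.cnt x₁ x₂ y₁ y₂ := S.cnt_lt_of (Ioo_subset_Ioo hbk.le le_rfl) (Set.Subset.refl (Ioo y₁ y₂))
          (Or.inr (Or.inl hss))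
        have hIH := (IH (S.cnt (S.b k) x₂ y₁ y₂) (lt_of_lt_of_le hlt hcnt) (S.b k) x₂ y₁ y₂
          (S.memx (S.b_mem_patch k)) hx₂ hy₁ hy₂ hc.le hy12 le_rfl).2.2.2
        rw [hxs_eq]; unfold Vol; linarith
    have t3 : 0 ≤ Vol S.HQ x₁ xs y₁ ys := by
      rcases le_or_gt (S.c k) y₁ with hc | hc
      · rw [hys_def, max_eq_left hc]
        exact le_of_eq (by unfold Vol; ring)
      · have hys_eq : ys = S.c k := max_eq_right hc.le
        have hedge : S.HQ x₁ (S.c k) = S.HP x₁ (S.c k) :=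
          S.edge_eq hxk (S.c_mem_patch k) (Or.inr (Or.inr (Or.inl rfl)))
        have hsub : {j : Fin S.m | S.c j ∈ Ioo y₁ (S.c k)} ⊆
            {j : Fin S.m | S.c j ∈ Ioo y₁ y₂} :=
          fun j hj => Ioo_subset_Ioo le_rfl hck.le hj
        have hss : {j : Fin S.m | S.c j ∈ Ioo y₁ (S.c k)} ⊂
            {j : Fin S.m | S.c j ∈ Ioo y₁ y₂} := by
          refine (Set.ssubset_iff_of_subset hsub).2 ⟨k, ?_, ?_⟩
          · simp only [Set.mem_setOf_eq, Set.mem_Ioo]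
            exact ⟨hc, hck⟩
          · simp only [Set.mem_setOf_eq, Set.mem_Ioo]
            exact fun hmem => lt_irrefl _ hmem.2
        have hlt : S.cnt x₁ xs y₁ (S.c k) < S.cnt x₁ x₂ y₁ y₂ := S.cnt_lt_of (Ioo_subset_Ioo le_rfl hxs2) (Ioo_subset_Ioo le_rfl hck.le)
          (Or.inr (Or.inr (Or.inl hss)))
        have hIH := (IH (S.cnt x₁ xs y₁ (S.c k)) (lt_of_lt_of_le hlt hcnt) x₁ xs y₁ (S.c k)
          hx₁ hxsm hy₁ (S.memy (S.c_mem_patch k)) hxs1 hc.le le_rfl).2.2.2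
        rw [hys_eq]; unfold Vol; linarith
    linarith

/-- The four inequalities, unconditionally. -/
lemma ineqs {x₁ x₂ y₁ y₂ : ℝ} (hx₁ : x₁ ∈ Icc (0:ℝ) 1) (hx₂ : x₂ ∈ Icc (0:ℝ) 1)
    (hy₁ : y₁ ∈ Icc (0:ℝ) 1) (hy₂ : y₂ ∈ Icc (0:ℝ) 1) (h12 : x₁ ≤ x₂) (h34 : y₁ ≤ y₂) :
    0 ≤ S.HQ x₁ y₁ + S.HP x₂ y₂ - S.HP x₁ y₂ - S.HP x₂ y₁ ∧
    0 ≤ S.HP x₁ y₁ + S.HQ x₂ y₂ - S.HP x₁ y₂ - S.HP x₂ y₁ ∧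
    0 ≤ S.HQ x₁ y₁ + S.HQ x₂ y₂ - S.HQ x₁ y₂ - S.HP x₂ y₁ ∧
    0 ≤ S.HQ x₁ y₁ + S.HQ x₂ y₂ - S.HP x₁ y₂ - S.HQ x₂ y₁ :=
  S.main_ineqs (S.cnt x₁ x₂ y₁ y₂) x₁ x₂ y₁ y₂ hx₁ hx₂ hy₁ hy₂ h12 h34 le_rfl

end PW
namespace PW

variable (S : PW)

/-- A patchwork function satisfies the boundary conditions. -/
lemma boundary_patch {Qs : Fin S.m → ℝ → ℝ → ℝ} {H : ℝ → ℝ → ℝ}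
    (hH : IsPatchwork S.C S.a S.b S.c S.d Qs H) (hq : ∀ k, QuasiCopula (Qs k)) :
    Boundary H := by
  have hCb : Boundary S.C := S.hC.1.1
  intro x hx
  refine ⟨?_, ?_, ?_, ?_⟩
  · -- H x 0 = 0
    obtain ⟨k, hxk, hyk⟩ := S.hcover x hx 0 ⟨le_rfl, zero_le_one⟩
    have hck : S.c k = 0 := le_antisymm hyk.1 (S.hrect k).2.2.2.1
    have h1 : S.C x 0 = 0 := (hCb x hx).1
    have h2 : S.C (S.a k) 0 = 0 := (hCb _ (S.memx (S.a_mem_patch k))).1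
    by_cases hV : 0 < S.V k
    · have hg0 : S.g k 0 = 0 := by conv_lhs => rw [← hck, S.g_c k]
      have hQ0 : Qs k (S.f k x) (S.g k 0) = 0 := by
        rw [hg0]; exact ((hq k).1 _ (S.f_mem hV hxk)).1
      rw [S.patch_on hH hV hxk hyk, hQ0, hck, h1, h2]; ring
    · rw [S.patch_on0 hH hV hxk hyk, hck, h1, h2]; ring
  · -- H 0 x = 0
    obtain ⟨k, hxk, hyk⟩ := S.hcover 0 ⟨le_rfl, zero_le_one⟩ x hx
    have hak : S.a k = 0 := le_antisymm hxk.1 (S.hrect k).1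
    have h1 : S.C 0 (S.c k) = 0 := (hCb _ (S.memy (S.c_mem_patch k))).2.1
    have h2 : S.C 0 x = 0 := (hCb x hx).2.1
    by_cases hV : 0 < S.V k
    · have hf0 : S.f k 0 = 0 := by conv_lhs => rw [← hak, S.f_a k]
      have hQ0 : Qs k (S.f k 0) (S.g k x) = 0 := by
        rw [hf0]; exact ((hq k).1 _ (S.g_mem hV hyk)).2.1
      rw [S.patch_on hH hV hxk hyk, hQ0, hak, h1, h2]; ring
    · rw [S.patch_on0 hH hV hxk hyk, hak, h1, h2]; ring
  · -- H x 1 = x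
    obtain ⟨k, hxk, hyk⟩ := S.hcover x hx 1 ⟨zero_le_one, le_rfl⟩
    have hdk : S.d k = 1 := le_antisymm (S.hrect k).2.2.2.2.2 hyk.2
    have hx1 : S.C x 1 = x := (hCb x hx).2.2.1
    have ha1 : S.C (S.a k) 1 = S.a k := (hCb _ (S.memx (S.a_mem_patch k))).2.2.1
    by_cases hV : 0 < S.V k
    · have hg1 : S.g k 1 = 1 := by conv_lhs => rw [← hdk, S.g_d hV]
      have hQ : Qs k (S.f k x) (S.g k 1) = S.f k x := by
        rw [hg1]; exact ((hq k).1 _ (S.f_mem hV hxk)).2.2.1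
      have hfx : S.V k * S.f k x = S.C x (S.d k) - S.C x (S.c k) - S.C (S.a k) (S.d k)
          + S.C (S.a k) (S.c k) := by
        unfold f; field_simp
      rw [hdk, hx1, ha1] at hfx
      rw [S.patch_on hH hV hxk hyk, hQ, ha1]
      linarith
    · have hV0 : S.V k = 0 := le_antisymm (not_lt.1 hV) (S.V_nonneg k)
      have hsplit : S.V k = Vol S.C (S.a k) x (S.c k) (S.d k)
          + Vol S.C x (S.b k) (S.c k) (S.d k) := by unfold V Vol; ring
      have hp1 : 0 ≤ Vol S.C (S.a k) x (S.c k) (S.d k) :=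
        S.volC (S.memx (S.a_mem_patch k)) hx (S.memy (S.c_mem_patch k))
          (S.memy (S.d_mem_patch k)) hxk.1 (S.hrect k).2.2.2.2.1
      have hp2 : 0 ≤ Vol S.C x (S.b k) (S.c k) (S.d k) :=
        S.volC hx (S.memx (S.b_mem_patch k)) (S.memy (S.c_mem_patch k))
          (S.memy (S.d_mem_patch k)) hxk.2 (S.hrect k).2.2.2.2.1
      have hz : Vol S.C (S.a k) x (S.c k) (S.d k) = 0 := by linarith
      rw [hdk] at hz
      unfold Vol at hz
      rw [hx1, ha1] at hz
      rw [S.patch_on0 hH hV hxk hyk, ha1]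
      linarith
  · -- H 1 x = x
    obtain ⟨k, hxk, hyk⟩ := S.hcover 1 ⟨zero_le_one, le_rfl⟩ x hx
    have hbk : S.b k = 1 := le_antisymm (S.hrect k).2.2.1 hxk.2
    have hx1 : S.C 1 x = x := (hCb x hx).2.2.2
    have hc1 : S.C 1 (S.c k) = S.c k := (hCb _ (S.memy (S.c_mem_patch k))).2.2.2
    by_cases hV : 0 < S.V k
    · have hf1 : S.f k 1 = 1 := by conv_lhs => rw [← hbk, S.f_b hV]
      have hQ : Qs k (S.f k 1) (S.g k x) = S.g k x := by
        rw [hf1]; exact ((hq k).1 _ (S.g_mem hV hyk)).2.2.2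
      have hgx : S.V k * S.g k x = S.C (S.b k) x - S.C (S.a k) x - S.C (S.b k) (S.c k)
          + S.C (S.a k) (S.c k) := by
        unfold g; field_simp
      rw [hbk, hx1, hc1] at hgx
      rw [S.patch_on hH hV hxk hyk, hQ, hc1]
      linarith
    · have hV0 : S.V k = 0 := le_antisymm (not_lt.1 hV) (S.V_nonneg k)
      have hsplit : S.V k = Vol S.C (S.a k) (S.b k) (S.c k) x
          + Vol S.C (S.a k) (S.b k) x (S.d k) := by unfold V Vol; ring
      have hp1 : 0 ≤ Vol S.C (S.a k) (S.b k) (S.c k) x :=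
        S.volC (S.memx (S.a_mem_patch k)) (S.memx (S.b_mem_patch k))
          (S.memy (S.c_mem_patch k)) hx (S.hrect k).2.1 hyk.1
      have hp2 : 0 ≤ Vol S.C (S.a k) (S.b k) x (S.d k) :=
        S.volC (S.memx (S.a_mem_patch k)) (S.memx (S.b_mem_patch k)) hx
          (S.memy (S.d_mem_patch k)) (S.hrect k).2.1 hyk.2
      have hz : Vol S.C (S.a k) (S.b k) (S.c k) x = 0 := by linarith
      rw [hbk] at hz
      unfold Vol at hz
      rw [hx1, hc1] at hz
      rw [S.patch_on0 hH hV hxk hyk, hc1]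
      linarith

end PW
namespace PW

variable (S : PW)

lemma contC1 {y : ℝ} (hy : y ∈ Icc (0:ℝ) 1) :
    ContinuousOn (fun t => S.C t y) (Icc (0:ℝ) 1) := by
  have hL : LipschitzOnWith 1 (fun t => S.C t y) (Icc (0:ℝ) 1) := by
    rw [lipschitzOnWith_iff_dist_le_mul]
    intro p hp q hq
    have h := S.hC.1.2.2.2.2 q p y y hq hp hy hy
    rw [Real.dist_eq, Real.dist_eq]
    simpa using h
  exact hL.continuousOn

lemma contC2 {x : ℝ} (hx : x ∈ Icc (0:ℝ) 1) :
    ContinuousOn (fun t => S.C x t) (Icc (0:ℝ) 1) := by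
  have hL : LipschitzOnWith 1 (fun t => S.C x t) (Icc (0:ℝ) 1) := by
    rw [lipschitzOnWith_iff_dist_le_mul]
    intro p hp q hq
    have h := S.hC.1.2.2.2.2 x x q p hx hx hq hp
    rw [Real.dist_eq, Real.dist_eq]
    simpa using h
  exact hL.continuousOn

lemma f_contOn (k : Fin S.m) : ContinuousOn (S.f k) (Icc (S.a k) (S.b k)) := by
  have hsub : Icc (S.a k) (S.b k) ⊆ Icc (0:ℝ) 1 := fun t ht => S.memx ht
  have h1 := (S.contC1 (S.memy (S.d_mem_patch k))).mono hsub
  have h2 := (S.contC1 (S.memy (S.c_mem_patch k))).mono hsub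
  show ContinuousOn (fun x => (S.C x (S.d k) - S.C x (S.c k) - S.C (S.a k) (S.d k)
    + S.C (S.a k) (S.c k)) / S.V k) (Icc (S.a k) (S.b k))
  exact (((h1.sub h2).sub continuousOn_const).add continuousOn_const).div_const _

lemma g_contOn (k : Fin S.m) : ContinuousOn (S.g k) (Icc (S.c k) (S.d k)) := by
  have hsub : Icc (S.c k) (S.d k) ⊆ Icc (0:ℝ) 1 := fun t ht => S.memy ht
  have h1 := (S.contC2 (S.memx (S.b_mem_patch k))).mono hsub
  have h2 := (S.contC2 (S.memx (S.a_mem_patch k))).mono hsub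
  show ContinuousOn (fun y => (S.C (S.b k) y - S.C (S.a k) y - S.C (S.b k) (S.c k)
    + S.C (S.a k) (S.c k)) / S.V k) (Icc (S.c k) (S.d k))
  exact (((h1.sub h2).sub continuousOn_const).add continuousOn_const).div_const _

lemma realize_f_up {k : Fin S.m} (hV : 0 < S.V k) {x u' : ℝ} (hx : x ∈ Icc (S.a k) (S.b k))
    (h1 : S.f k x ≤ u') (h2 : u' ≤ 1) :
    ∃ x', x ≤ x' ∧ x' ≤ S.b k ∧ S.f k x' = u' := by
  have hc : ContinuousOn (S.f k) (Icc x (S.b k)) :=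
    (S.f_contOn k).mono (Icc_subset_Icc hx.1 le_rfl)
  have h := intermediate_value_Icc hx.2 hc
  rw [S.f_b hV] at h
  obtain ⟨x', hx', hfx'⟩ := h ⟨h1, h2⟩
  exact ⟨x', hx'.1, hx'.2, hfx'⟩

lemma realize_f_down {k : Fin S.m} (hV : 0 < S.V k) {x u' : ℝ} (hx : x ∈ Icc (S.a k) (S.b k))
    (h1 : 0 ≤ u') (h2 : u' ≤ S.f k x) :
    ∃ x', S.a k ≤ x' ∧ x' ≤ x ∧ S.f k x' = u' := by
  have hc : ContinuousOn (S.f k) (Icc (S.a k) x) :=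
    (S.f_contOn k).mono (Icc_subset_Icc le_rfl hx.2)
  have h := intermediate_value_Icc hx.1 hc
  rw [S.f_a k] at h
  obtain ⟨x', hx', hfx'⟩ := h ⟨h1, h2⟩
  exact ⟨x', hx'.1, hx'.2, hfx'⟩

lemma realize_g_up {k : Fin S.m} (hV : 0 < S.V k) {y v' : ℝ} (hy : y ∈ Icc (S.c k) (S.d k))
    (h1 : S.g k y ≤ v') (h2 : v' ≤ 1) :
    ∃ y', y ≤ y' ∧ y' ≤ S.d k ∧ S.g k y' = v' := by
  have hc : ContinuousOn (S.g k) (Icc y (S.d k)) :=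
    (S.g_contOn k).mono (Icc_subset_Icc hy.1 le_rfl)
  have h := intermediate_value_Icc hy.2 hc
  rw [S.g_d hV] at h
  obtain ⟨y', hy', hgy'⟩ := h ⟨h1, h2⟩
  exact ⟨y', hy'.1, hy'.2, hgy'⟩

lemma realize_g_down {k : Fin S.m} (hV : 0 < S.V k) {y v' : ℝ} (hy : y ∈ Icc (S.c k) (S.d k))
    (h1 : 0 ≤ v') (h2 : v' ≤ S.g k y) :
    ∃ y', S.c k ≤ y' ∧ y' ≤ y ∧ S.g k y' = v' := by
  have hc : ContinuousOn (S.g k) (Icc (S.c k) y) :=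
    (S.g_contOn k).mono (Icc_subset_Icc le_rfl hy.2)
  have h := intermediate_value_Icc hy.1 hc
  rw [S.g_c k] at h
  obtain ⟨y', hy', hgy'⟩ := h ⟨h1, h2⟩
  exact ⟨y', hy'.1, hy'.2, hgy'⟩

end PW
namespace PW

variable (S : PW)

lemma lb_se {x y : ℝ} (hx : x ∈ Icc (0:ℝ) 1) (hy : y ∈ Icc (0:ℝ) 1) :
    S.HP x y - S.HQ x y ∈ lowerBounds (insert 0
      {v | ∃ x' y', x ≤ x' ∧ x' ≤ 1 ∧ y ≤ y' ∧ y' ≤ 1 ∧ v = Vol S.HP x x' y y'}) := by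
  intro v hv
  rcases Set.mem_insert_iff.1 hv with rfl | ⟨x', y', h1, h2, h3, h4, rfl⟩
  · linarith [S.HPleHQ hx hy]
  · have h := (S.ineqs hx ⟨hx.1.trans h1, h2⟩ hy ⟨hy.1.trans h3, h4⟩ h1 h3).1
    unfold Vol; linarith

lemma lb_nw {x y : ℝ} (hx : x ∈ Icc (0:ℝ) 1) (hy : y ∈ Icc (0:ℝ) 1) :
    S.HP x y - S.HQ x y ∈ lowerBounds (insert 0
      {v | ∃ x' y', 0 ≤ x' ∧ x' ≤ x ∧ 0 ≤ y' ∧ y' ≤ y ∧ v = Vol S.HP x' x y' y}) := by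
  intro v hv
  rcases Set.mem_insert_iff.1 hv with rfl | ⟨x', y', h1, h2, h3, h4, rfl⟩
  · linarith [S.HPleHQ hx hy]
  · have h := (S.ineqs ⟨h1, h2.trans hx.2⟩ hx ⟨h3, h4.trans hy.2⟩ hy h2 h4).2.1
    unfold Vol; linarith

lemma lb_sw {x y : ℝ} (hx : x ∈ Icc (0:ℝ) 1) (hy : y ∈ Icc (0:ℝ) 1) :
    S.HP x y - S.HQ x y ∈ lowerBounds (insert 0
      {v | ∃ x' y', x ≤ x' ∧ x' ≤ 1 ∧ 0 ≤ y' ∧ y' ≤ y ∧ v = Vol S.HQ x x' y' y}) := by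
  intro v hv
  rcases Set.mem_insert_iff.1 hv with rfl | ⟨x', y', h1, h2, h3, h4, rfl⟩
  · linarith [S.HPleHQ hx hy]
  · have h := (S.ineqs hx ⟨hx.1.trans h1, h2⟩ ⟨h3, h4.trans hy.2⟩ hy h1 h4).2.2.2
    unfold Vol; linarith

lemma lb_ne {x y : ℝ} (hx : x ∈ Icc (0:ℝ) 1) (hy : y ∈ Icc (0:ℝ) 1) :
    S.HP x y - S.HQ x y ∈ lowerBounds (insert 0
      {v | ∃ x' y', 0 ≤ x' ∧ x' ≤ x ∧ y ≤ y' ∧ y' ≤ 1 ∧ v = Vol S.HQ x' x y y'}) := by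
  intro v hv
  rcases Set.mem_insert_iff.1 hv with rfl | ⟨x', y', h1, h2, h3, h4, rfl⟩
  · linarith [S.HPleHQ hx hy]
  · have h := (S.ineqs ⟨h1, h2.trans hx.2⟩ hx hy ⟨hy.1.trans h3, h4⟩ h2 h3).2.2.1
    unfold Vol; linarith

lemma dmc_eq {x y : ℝ} (hx : x ∈ Icc (0:ℝ) 1) (hy : y ∈ Icc (0:ℝ) 1) :
    DMC S.HP x y = S.HP x y - S.HQ x y := by
  have hbse : BddBelow (insert 0
      {v | ∃ x' y', x ≤ x' ∧ x' ≤ 1 ∧ y ≤ y' ∧ y' ≤ 1 ∧ v = Vol S.HP x x' y y'}) :=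
    ⟨_, S.lb_se hx hy⟩
  have hbnw : BddBelow (insert 0
      {v | ∃ x' y', 0 ≤ x' ∧ x' ≤ x ∧ 0 ≤ y' ∧ y' ≤ y ∧ v = Vol S.HP x' x y' y}) :=
    ⟨_, S.lb_nw hx hy⟩
  have hge : S.HP x y - S.HQ x y ≤ DMC S.HP x y :=
    le_min (le_csInf ⟨0, Set.mem_insert 0 _⟩ (fun v hv => S.lb_se hx hy hv))
      (le_csInf ⟨0, Set.mem_insert 0 _⟩ (fun v hv => S.lb_nw hx hy hv))
  refine le_antisymm ?_ hge
  obtain ⟨k, hxk, hyk⟩ := S.hcover x hx y hy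
  by_cases hV : 0 < S.V k
  · have hu := S.f_mem hV hxk
    have hv := S.g_mem hV hyk
    have hself := (S.hsd k hV).2.1 _ hu _ hv
    have hse : DseC S.HP x y ≤ S.V k * DseC (S.P k) (S.f k x) (S.g k y) := by
      rw [mul_comm]
      rw [← div_le_iff₀ hV]
      apply le_csInf ⟨0, Set.mem_insert 0 _⟩
      intro r hr
      rw [div_le_iff₀ hV]
      rcases Set.mem_insert_iff.1 hr with rfl | ⟨u', v', h1, h2, h3, h4, rfl⟩
      · rw [zero_mul]
        exact csInf_le hbse (Set.mem_insert 0 _)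
      · obtain ⟨x', hxx', hx'b, hfx'⟩ := S.realize_f_up hV hxk h1 h2
        obtain ⟨y', hyy', hy'd, hgy'⟩ := S.realize_g_up hV hyk h3 h4
        have hx'p : x' ∈ Icc (S.a k) (S.b k) := ⟨hxk.1.trans hxx', hx'b⟩
        have hy'p : y' ∈ Icc (S.c k) (S.d k) := ⟨hyk.1.trans hyy', hy'd⟩
        have hvol := S.vol_on S.hHP hV hxk hx'p hyk hy'p
        rw [hfx', hgy'] at hvol
        have hmem : Vol S.HP x x' y y' ∈ insert 0
            {v | ∃ x' y', x ≤ x' ∧ x' ≤ 1 ∧ y ≤ y' ∧ y' ≤ 1 ∧ v = Vol S.HP x x' y y'} :=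
          Set.mem_insert_of_mem _ ⟨x', y', hxx', hx'b.trans (S.hrect k).2.2.1,
            hyy', hy'd.trans (S.hrect k).2.2.2.2.2, rfl⟩
        calc DseC S.HP x y ≤ Vol S.HP x x' y y' := csInf_le hbse hmem
        _ = S.V k * Vol (S.P k) (S.f k x) u' (S.g k y) v' := hvol
        _ = Vol (S.P k) (S.f k x) u' (S.g k y) v' * S.V k := mul_comm _ _
    have hnw : DnwC S.HP x y ≤ S.V k * DnwC (S.P k) (S.f k x) (S.g k y) := by
      rw [mul_comm]
      rw [← div_le_iff₀ hV]
      apply le_csInf ⟨0, Set.mem_insert 0 _⟩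
      intro r hr
      rw [div_le_iff₀ hV]
      rcases Set.mem_insert_iff.1 hr with rfl | ⟨u', v', h1, h2, h3, h4, rfl⟩
      · rw [zero_mul]
        exact csInf_le hbnw (Set.mem_insert 0 _)
      · obtain ⟨x', hax', hx'x, hfx'⟩ := S.realize_f_down hV hxk h1 h2
        obtain ⟨y', hcy', hy'y, hgy'⟩ := S.realize_g_down hV hyk h3 h4
        have hx'p : x' ∈ Icc (S.a k) (S.b k) := ⟨hax', hx'x.trans hxk.2⟩
        have hy'p : y' ∈ Icc (S.c k) (S.d k) := ⟨hcy', hy'y.trans hyk.2⟩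
        have hvol := S.vol_on S.hHP hV hx'p hxk hy'p hyk
        rw [hfx', hgy'] at hvol
        have hmem : Vol S.HP x' x y' y ∈ insert 0
            {v | ∃ x' y', 0 ≤ x' ∧ x' ≤ x ∧ 0 ≤ y' ∧ y' ≤ y ∧ v = Vol S.HP x' x y' y} :=
          Set.mem_insert_of_mem _ ⟨x', y', (S.hrect k).1.trans hax', hx'x,
            (S.hrect k).2.2.2.1.trans hcy', hy'y, rfl⟩
        calc DnwC S.HP x y ≤ Vol S.HP x' x y' y := csInf_le hbnw hmem
        _ = S.V k * Vol (S.P k) u' (S.f k x) v' (S.g k y) := hvol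
        _ = Vol (S.P k) u' (S.f k x) v' (S.g k y) * S.V k := mul_comm _ _
    have hd := S.diff_on hV hxk hyk
    rcases le_total (DseC (S.P k) (S.f k x) (S.g k y)) (DnwC (S.P k) (S.f k x) (S.g k y))
      with hcase | hcase
    · have h1 : DseC (S.P k) (S.f k x) (S.g k y)
          = S.P k (S.f k x) (S.g k y) - S.Q k (S.f k x) (S.g k y) := by
        have : DMC (S.P k) (S.f k x) (S.g k y) = DseC (S.P k) (S.f k x) (S.g k y) :=
          min_eq_left hcase
        linarith [hself, this]
      rw [h1] at hse
      calc DMC S.HP x y ≤ DseC S.HP x y := min_le_left _ _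
      _ ≤ S.HP x y - S.HQ x y := by nlinarith [hse, hd]
    · have h1 : DnwC (S.P k) (S.f k x) (S.g k y)
          = S.P k (S.f k x) (S.g k y) - S.Q k (S.f k x) (S.g k y) := by
        have : DMC (S.P k) (S.f k x) (S.g k y) = DnwC (S.P k) (S.f k x) (S.g k y) :=
          min_eq_right hcase
        linarith [hself, this]
      rw [h1] at hnw
      calc DMC S.HP x y ≤ DnwC S.HP x y := min_le_right _ _
      _ ≤ S.HP x y - S.HQ x y := by nlinarith [hnw, hd]
  · have heq := S.diff_on0 hV hxk hyk
    have h0 : DseC S.HP x y ≤ 0 := csInf_le hbse (Set.mem_insert 0 _)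
    calc DMC S.HP x y ≤ DseC S.HP x y := min_le_left _ _
    _ ≤ 0 := h0
    _ = S.HP x y - S.HQ x y := by rw [heq]; ring

lemma doc_eq {x y : ℝ} (hx : x ∈ Icc (0:ℝ) 1) (hy : y ∈ Icc (0:ℝ) 1) :
    DOC S.HQ x y = S.HP x y - S.HQ x y := by
  have hbsw : BddBelow (insert 0
      {v | ∃ x' y', x ≤ x' ∧ x' ≤ 1 ∧ 0 ≤ y' ∧ y' ≤ y ∧ v = Vol S.HQ x x' y' y}) :=
    ⟨_, S.lb_sw hx hy⟩
  have hbne : BddBelow (insert 0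
      {v | ∃ x' y', 0 ≤ x' ∧ x' ≤ x ∧ y ≤ y' ∧ y' ≤ 1 ∧ v = Vol S.HQ x' x y y'}) :=
    ⟨_, S.lb_ne hx hy⟩
  have hge : S.HP x y - S.HQ x y ≤ DOC S.HQ x y :=
    le_min (le_csInf ⟨0, Set.mem_insert 0 _⟩ (fun v hv => S.lb_sw hx hy hv))
      (le_csInf ⟨0, Set.mem_insert 0 _⟩ (fun v hv => S.lb_ne hx hy hv))
  refine le_antisymm ?_ hge
  obtain ⟨k, hxk, hyk⟩ := S.hcover x hx y hy
  by_cases hV : 0 < S.V k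
  · have hu := S.f_mem hV hxk
    have hv := S.g_mem hV hyk
    have hself := (S.hsd k hV).2.2 _ hu _ hv
    have hsw : DswC S.HQ x y ≤ S.V k * DswC (S.Q k) (S.f k x) (S.g k y) := by
      rw [mul_comm]
      rw [← div_le_iff₀ hV]
      apply le_csInf ⟨0, Set.mem_insert 0 _⟩
      intro r hr
      rw [div_le_iff₀ hV]
      rcases Set.mem_insert_iff.1 hr with rfl | ⟨u', v', h1, h2, h3, h4, rfl⟩
      · rw [zero_mul]
        exact csInf_le hbsw (Set.mem_insert 0 _)
      · obtain ⟨x', hxx', hx'b, hfx'⟩ := S.realize_f_up hV hxk h1 h2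
        obtain ⟨y', hcy', hy'y, hgy'⟩ := S.realize_g_down hV hyk h3 h4
        have hx'p : x' ∈ Icc (S.a k) (S.b k) := ⟨hxk.1.trans hxx', hx'b⟩
        have hy'p : y' ∈ Icc (S.c k) (S.d k) := ⟨hcy', hy'y.trans hyk.2⟩
        have hvol := S.vol_on S.hHQ hV hxk hx'p hy'p hyk
        rw [hfx', hgy'] at hvol
        have hmem : Vol S.HQ x x' y' y ∈ insert 0
            {v | ∃ x' y', x ≤ x' ∧ x' ≤ 1 ∧ 0 ≤ y' ∧ y' ≤ y ∧ v = Vol S.HQ x x' y' y} :=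
          Set.mem_insert_of_mem _ ⟨x', y', hxx', hx'b.trans (S.hrect k).2.2.1,
            (S.hrect k).2.2.2.1.trans hcy', hy'y, rfl⟩
        calc DswC S.HQ x y ≤ Vol S.HQ x x' y' y := csInf_le hbsw hmem
        _ = S.V k * Vol (S.Q k) (S.f k x) u' v' (S.g k y) := hvol
        _ = Vol (S.Q k) (S.f k x) u' v' (S.g k y) * S.V k := mul_comm _ _
    have hne : DneC S.HQ x y ≤ S.V k * DneC (S.Q k) (S.f k x) (S.g k y) := by
      rw [mul_comm]
      rw [← div_le_iff₀ hV]
      apply le_csInf ⟨0, Set.mem_insert 0 _⟩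
      intro r hr
      rw [div_le_iff₀ hV]
      rcases Set.mem_insert_iff.1 hr with rfl | ⟨u', v', h1, h2, h3, h4, rfl⟩
      · rw [zero_mul]
        exact csInf_le hbne (Set.mem_insert 0 _)
      · obtain ⟨x', hax', hx'x, hfx'⟩ := S.realize_f_down hV hxk h1 h2
        obtain ⟨y', hyy', hy'd, hgy'⟩ := S.realize_g_up hV hyk h3 h4
        have hx'p : x' ∈ Icc (S.a k) (S.b k) := ⟨hax', hx'x.trans hxk.2⟩
        have hy'p : y' ∈ Icc (S.c k) (S.d k) := ⟨hyk.1.trans hyy', hy'd⟩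
        have hvol := S.vol_on S.hHQ hV hx'p hxk hyk hy'p
        rw [hfx', hgy'] at hvol
        have hmem : Vol S.HQ x' x y y' ∈ insert 0
            {v | ∃ x' y', 0 ≤ x' ∧ x' ≤ x ∧ y ≤ y' ∧ y' ≤ 1 ∧ v = Vol S.HQ x' x y y'} :=
          Set.mem_insert_of_mem _ ⟨x', y', (S.hrect k).1.trans hax', hx'x,
            hyy', hy'd.trans (S.hrect k).2.2.2.2.2, rfl⟩
        calc DneC S.HQ x y ≤ Vol S.HQ x' x y y' := csInf_le hbne hmem
        _ = S.V k * Vol (S.Q k) u' (S.f k x) (S.g k y) v' := hvol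
        _ = Vol (S.Q k) u' (S.f k x) (S.g k y) v' * S.V k := mul_comm _ _
    have hd := S.diff_on hV hxk hyk
    rcases le_total (DswC (S.Q k) (S.f k x) (S.g k y)) (DneC (S.Q k) (S.f k x) (S.g k y))
      with hcase | hcase
    · have h1 : DswC (S.Q k) (S.f k x) (S.g k y)
          = S.P k (S.f k x) (S.g k y) - S.Q k (S.f k x) (S.g k y) := by
        have : DOC (S.Q k) (S.f k x) (S.g k y) = DswC (S.Q k) (S.f k x) (S.g k y) :=
          min_eq_left hcase
        linarith [hself, this]
      rw [h1] at hsw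
      calc DOC S.HQ x y ≤ DswC S.HQ x y := min_le_left _ _
      _ ≤ S.HP x y - S.HQ x y := by nlinarith [hsw, hd]
    · have h1 : DneC (S.Q k) (S.f k x) (S.g k y)
          = S.P k (S.f k x) (S.g k y) - S.Q k (S.f k x) (S.g k y) := by
        have : DOC (S.Q k) (S.f k x) (S.g k y) = DneC (S.Q k) (S.f k x) (S.g k y) :=
          min_eq_right hcase
        linarith [hself, this]
      rw [h1] at hne
      calc DOC S.HQ x y ≤ DneC S.HQ x y := min_le_right _ _
      _ ≤ S.HP x y - S.HQ x y := by nlinarith [hne, hd]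
  · have heq := S.diff_on0 hV hxk hyk
    have h0 : DswC S.HQ x y ≤ 0 := csInf_le hbsw (Set.mem_insert 0 _)
    calc DOC S.HQ x y ≤ DswC S.HQ x y := min_le_left _ _
    _ ≤ 0 := h0
    _ = S.HP x y - S.HQ x y := by rw [heq]; ring

end PW
/-- Under the hypotheses of the patchwork construction, if `(P k, Q k)`
is a self-dual imprecise copula for every `k` with `V_C(R_k) > 0`, then the patchwork
pair `(HP, HQ)` is a self-dual imprecise copula. -/
theorem patchwork_selfDual {m : ℕ} (C : ℝ → ℝ → ℝ) (a b c d : Fin m → ℝ)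
    (P Q : Fin m → ℝ → ℝ → ℝ) (HP HQ : ℝ → ℝ → ℝ)
    (hC : Copula C)
    (hrect : ∀ k, 0 ≤ a k ∧ a k ≤ b k ∧ b k ≤ 1 ∧ 0 ≤ c k ∧ c k ≤ d k ∧ d k ≤ 1)
    (hdisj : ∀ k k', k ≠ k' →
      (Ioo (a k) (b k) ×ˢ Ioo (c k) (d k)) ∩ (Ioo (a k') (b k') ×ˢ Ioo (c k') (d k')) = ∅)
    (hcover : ∀ x ∈ Icc (0:ℝ) 1, ∀ y ∈ Icc (0:ℝ) 1,
      ∃ k, x ∈ Icc (a k) (b k) ∧ y ∈ Icc (c k) (d k))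
    (hqc : ∀ k, QuasiCopula (P k) ∧ QuasiCopula (Q k))
    (himp : ∀ k, ImpreciseCopula (P k) (Q k))
    (hHP : IsPatchwork C a b c d P HP)
    (hHQ : IsPatchwork C a b c d Q HQ)
    (hsd : ∀ k, 0 < Vol C (a k) (b k) (c k) (d k) → SelfDualC (P k) (Q k)) :
    SelfDualC HP HQ := by
  refine ⟨⟨?_, ?_, ?_⟩, ?_, ?_⟩
  · exact PW.boundary_patch
      ⟨m, C, a, b, c, d, P, Q, HP, HQ, hC, hrect, hcover, hqc, himp, hHP, hHQ, hsd⟩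
      hHP (fun k => (hqc k).1)
  · exact PW.boundary_patch
      ⟨m, C, a, b, c, d, P, Q, HP, HQ, hC, hrect, hcover, hqc, himp, hHP, hHQ, hsd⟩
      hHQ (fun k => (hqc k).2)
  · intro x₁ x₂ y₁ y₂ h1 h2 h3 h4 h5 h6
    exact PW.ineqs
      ⟨m, C, a, b, c, d, P, Q, HP, HQ, hC, hrect, hcover, hqc, himp, hHP, hHQ, hsd⟩
      h1 h2 h3 h4 h5 h6
  · intro x hx y hy
    have h : DMC HP x y = HP x y - HQ x y := PW.dmc_eq
      ⟨m, C, a, b, c, d, P, Q, HP, HQ, hC, hrect, hcover, hqc, himp, hHP, hHQ, hsd⟩ hx hy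
    linarith
  · intro x hx y hy
    have h : DOC HQ x y = HP x y - HQ x y := PW.doc_eq
      ⟨m, C, a, b, c, d, P, Q, HP, HQ, hC, hrect, hcover, hqc, himp, hHP, hHQ, hsd⟩ hx hy
    linarith
end

section
/- For every n ≥ 1 and 1 ≤ k ≤ n, the matrix F_n^k is a dense alternating sign matrix. Moreover, F_n^k is a proper ASM (i.e., contains at least one entry equal to −1) if and only if n ≥ 3 and 2 ≤ k ≤ n−1. -/
open Finset

/-- An `n×n` matrix encoded as `ℕ → ℕ → ℝ` with indices `1,…,n` and zero entries outside. -/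
def IsASM (n : ℕ) (a : ℕ → ℕ → ℝ) : Prop :=
  (∀ i j, ¬(1 ≤ i ∧ i ≤ n ∧ 1 ≤ j ∧ j ≤ n) → a i j = 0) ∧
  (∀ i j, a i j = -1 ∨ a i j = 0 ∨ a i j = 1) ∧
  (∀ i, 1 ≤ i → i ≤ n → ∑ j ∈ Icc 1 n, a i j = 1) ∧
  (∀ j, 1 ≤ j → j ≤ n → ∑ i ∈ Icc 1 n, a i j = 1) ∧
  (∀ i t, 1 ≤ i → i ≤ n → t ≤ n →
    (∑ j ∈ Icc 1 t, a i j = 0 ∨ ∑ j ∈ Icc 1 t, a i j = 1)) ∧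
  (∀ j t, 1 ≤ j → j ≤ n → t ≤ n →
    (∑ i ∈ Icc 1 t, a i j = 0 ∨ ∑ i ∈ Icc 1 t, a i j = 1))

/-- No zero entry lies between two nonzero entries in any row or column. -/
def IsDense (a : ℕ → ℕ → ℝ) : Prop :=
  (∀ i j₁ j₂ j₃, j₁ < j₂ → j₂ < j₃ → a i j₁ ≠ 0 → a i j₃ ≠ 0 → a i j₂ ≠ 0) ∧
  (∀ j i₁ i₂ i₃, i₁ < i₂ → i₂ < i₃ → a i₁ j ≠ 0 → a i₃ j ≠ 0 → a i₂ j ≠ 0)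

/-- A proper ASM contains at least one entry `-1`. -/
def IsProper (a : ℕ → ℕ → ℝ) : Prop := ∃ i j, a i j = -1

/-- The matrix `F_n^k`. -/
noncomputable def Fmat (n k : ℕ) : ℕ → ℕ → ℝ := fun i j =>
  if k + 1 ≤ i + j ∧ (i : ℤ) + j ≤ 2 * n - k + 1 ∧ |(i : ℤ) - j| ≤ (k : ℤ) - 1
  then (-1 : ℝ) ^ (i + j - k - 1) else 0

/-- The discrete quasi-copula associated with a matrix: `Q(A)(r,s) = Σ_{i≤r} Σ_{j≤s} a_{ij}`. -/
noncomputable def Qmat (a : ℕ → ℕ → ℝ) : ℕ → ℕ → ℝ := fun r s =>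
  ∑ i ∈ Icc 1 r, ∑ j ∈ Icc 1 s, a i j

/-- Volume of the rectangle `[i,j]×[k,l]` with respect to `Q`. -/
def vol (Q : ℕ → ℕ → ℝ) (i j k l : ℕ) : ℝ := Q i k + Q j l - Q i l - Q j k

/-- `D_↘^Q(r,s) = min{0, V_Q([r,r']×[s,s']) : r < r' ≤ n, s < s' ≤ n}`. -/
noncomputable def Dse (n : ℕ) (Q : ℕ → ℕ → ℝ) (r s : ℕ) : ℝ :=
  (Icc (r+1) n ×ˢ Icc (s+1) n).fold min 0 (fun p => vol Q r p.1 s p.2)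

/-- `D_↙^Q(r,s) = min{0, V_Q([r,r']×[s',s]) : r < r' ≤ n, 0 ≤ s' < s}`. -/
noncomputable def Dsw (n : ℕ) (Q : ℕ → ℕ → ℝ) (r s : ℕ) : ℝ :=
  (Icc (r+1) n ×ˢ range s).fold min 0 (fun p => vol Q r p.1 p.2 s)

/-- `D_↖^Q(r,s) = min{0, V_Q([r',r]×[s',s]) : 0 ≤ r' < r, 0 ≤ s' < s}`. -/
noncomputable def Dnw (n : ℕ) (Q : ℕ → ℕ → ℝ) (r s : ℕ) : ℝ :=
  (range r ×ˢ range s).fold min 0 (fun p => vol Q p.1 r p.2 s)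

/-- `D_↗^Q(r,s) = min{0, V_Q([r',r]×[s,s']) : 0 ≤ r' < r, s < s' ≤ n}`. -/
noncomputable def Dne (n : ℕ) (Q : ℕ → ℕ → ℝ) (r s : ℕ) : ℝ :=
  (range r ×ˢ Icc (s+1) n).fold min 0 (fun p => vol Q p.1 r s p.2)

/-- The main defect `D_M^Q`. -/
noncomputable def DM (n : ℕ) (Q : ℕ → ℕ → ℝ) (r s : ℕ) : ℝ :=
  min (Dse n Q r s) (Dnw n Q r s)

/-- The opposite defect `D_O^Q`. -/
noncomputable def DO (n : ℕ) (Q : ℕ → ℕ → ℝ) (r s : ℕ) : ℝ :=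
  min (Dsw n Q r s) (Dne n Q r s)

/-- Boundary conditions for a function on `L_n × L_n`. -/
def DiscBoundary (n : ℕ) (P : ℕ → ℕ → ℝ) : Prop :=
  ∀ i, i ≤ n → P i 0 = 0 ∧ P 0 i = 0 ∧ P i n = i ∧ P n i = i

/-- `(P,Q)` is a discrete imprecise copula on `L_n × L_n`. -/
def DiscImpreciseCopula (n : ℕ) (P Q : ℕ → ℕ → ℝ) : Prop :=
  DiscBoundary n P ∧ DiscBoundary n Q ∧
  ∀ i j k l, i ≤ j → j ≤ n → k ≤ l → l ≤ n →
    0 ≤ Q i k + P j l - P i l - P j k ∧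
    0 ≤ P i k + Q j l - P i l - P j k ∧
    0 ≤ Q i k + Q j l - Q i l - P j k ∧
    0 ≤ Q i k + Q j l - P i l - Q j k

/-- `(P,Q)` is a self-dual discrete imprecise copula: `P_M = Q` and `Q_O = P` on `L_n × L_n`. -/
def SelfDual (n : ℕ) (P Q : ℕ → ℕ → ℝ) : Prop :=
  DiscImpreciseCopula n P Q ∧
  (∀ r, r ≤ n → ∀ s, s ≤ n → P r s - DM n P r s = Q r s) ∧
  (∀ r, r ≤ n → ∀ s, s ≤ n → Q r s + DO n Q r s = P r s)

/-- A discrete quasi-copula (integer-range normalization) on `L_n × L_n`. -/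
def DiscQuasiCopula (n : ℕ) (Q : ℕ → ℕ → ℝ) : Prop :=
  DiscBoundary n Q ∧
  (∀ i i' j, i ≤ i' → i' ≤ n → j ≤ n → Q i j ≤ Q i' j) ∧
  (∀ i j j', j ≤ j' → j' ≤ n → i ≤ n → Q i j ≤ Q i j') ∧
  (∀ i i' j j', i ≤ n → i' ≤ n → j ≤ n → j' ≤ n →
    |Q i j - Q i' j'| ≤ |(i : ℝ) - i'| + |(j : ℝ) - j'|)

/-- A discrete copula: a discrete quasi-copula with all rectangle volumes nonnegative. -/
def DiscCopula (n : ℕ) (Q : ℕ → ℕ → ℝ) : Prop :=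
  DiscQuasiCopula n Q ∧
  ∀ i j k l, i ≤ j → j ≤ n → k ≤ l → l ≤ n → 0 ≤ vol Q i j k l

/-- A permutation matrix encoded as `ℕ → ℕ → ℝ` with indices `1,…,n`. -/
def IsPermMatrix (n : ℕ) (p : ℕ → ℕ → ℝ) : Prop :=
  (∀ i j, ¬(1 ≤ i ∧ i ≤ n ∧ 1 ≤ j ∧ j ≤ n) → p i j = 0) ∧
  (∀ i j, p i j = 0 ∨ p i j = 1) ∧
  (∀ i, 1 ≤ i → i ≤ n → ∑ j ∈ Icc 1 n, p i j = 1) ∧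
  (∀ j, 1 ≤ j → j ≤ n → ∑ i ∈ Icc 1 n, p i j = 1)

def flo (k i : ℕ) : ℕ := if i ≤ k then k + 1 - i else i - k + 1
def fhi (n k i : ℕ) : ℕ := if i + k ≤ n + 1 then i + k - 1 else 2*n + 1 - k - i

lemma flo_hi_facts (n k i : ℕ) (hk1 : 1 ≤ k) (hk2 : k ≤ n) (h1 : 1 ≤ i) (h2 : i ≤ n) :
    1 ≤ flo k i ∧ flo k i ≤ fhi n k i ∧ fhi n k i ≤ n ∧
    (flo k i + i) % 2 = (k+1) % 2 ∧ (fhi n k i + i) % 2 = (k+1) % 2 ∧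
    k + 1 ≤ flo k i + i := by
  unfold flo fhi; split_ifs <;> omega

lemma fcond_iff (n k i j : ℕ) (hk2 : k ≤ n) (h1 : 1 ≤ i) (h2 : i ≤ n) :
    (k + 1 ≤ i + j ∧ (i:ℤ) + j ≤ 2*n - k + 1 ∧ |(i:ℤ) - j| ≤ (k:ℤ) - 1)
      ↔ flo k i ≤ j ∧ j ≤ fhi n k i := by
  rw [abs_le]; unfold flo fhi; split_ifs <;> omega

lemma negpow_mod (a b : ℕ) (h : a % 2 = b % 2) : (-1:ℝ)^a = (-1:ℝ)^b := by
  rcases Nat.even_or_odd a with ha | ha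
  · rw [ha.neg_one_pow, (Nat.even_iff.mpr (by rw [← h]; exact Nat.even_iff.mp ha)).neg_one_pow]
  · rw [ha.neg_one_pow, (Nat.odd_iff.mpr (by rw [← h]; exact Nat.odd_iff.mp ha)).neg_one_pow]

lemma Fmat_val (n k i j : ℕ) (hk1 : 1 ≤ k) (hk2 : k ≤ n) (h1 : 1 ≤ i) (h2 : i ≤ n)
    (hj : flo k i ≤ j ∧ j ≤ fhi n k i) :
    Fmat n k i j = (-1:ℝ) ^ (j - flo k i) := by
  unfold Fmat
  rw [if_pos ((fcond_iff n k i j hk2 h1 h2).mpr hj)]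
  have hF := flo_hi_facts n k i hk1 hk2 h1 h2
  have hc : k + 1 ≤ i + j := ((fcond_iff n k i j hk2 h1 h2).mpr hj).1
  exact negpow_mod _ _ (by omega)

lemma Fmat_psum (n k i : ℕ) (hk1 : 1 ≤ k) (hk2 : k ≤ n) (h1 : 1 ≤ i) (h2 : i ≤ n) (t : ℕ) :
    ∑ j ∈ Icc 1 t, Fmat n k i j =
      if flo k i ≤ t ∧ (fhi n k i ≤ t ∨ (t - flo k i) % 2 = 0) then 1 else 0 := by
  obtain ⟨hL1, hLH, hHn, hpL, hpH, hLk⟩ := flo_hi_facts n k i hk1 hk2 h1 h2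
  induction t with
  | zero => rw [if_neg (by omega)]; simp
  | succ t ih =>
    rw [Finset.sum_Icc_succ_top (by omega : 1 ≤ t + 1), ih]
    by_cases hmem : flo k i ≤ t + 1 ∧ t + 1 ≤ fhi n k i
    · rw [Fmat_val n k i (t+1) hk1 hk2 h1 h2 hmem]
      rcases Nat.even_or_odd (t + 1 - flo k i) with he | he
      · have he2 := Nat.even_iff.mp he
        rw [he.neg_one_pow, if_neg (by omega), if_pos (by omega)]
        norm_num
      · have he2 := Nat.odd_iff.mp he
        rw [he.neg_one_pow, if_pos (by omega), if_neg (by omega)]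
        norm_num
    · have hz : Fmat n k i (t+1) = 0 := by
        unfold Fmat
        exact if_neg (fun hc => hmem ((fcond_iff n k i (t+1) hk2 h1 h2).mp hc))
      rw [hz, add_zero]
      by_cases hA : flo k i ≤ t ∧ (fhi n k i ≤ t ∨ (t - flo k i) % 2 = 0)
      · rw [if_pos hA, if_pos (by omega)]
      · rw [if_neg hA, if_neg (by omega)]

lemma Fmat_symm (n k i j : ℕ) : Fmat n k i j = Fmat n k j i := by
  unfold Fmat
  rw [add_comm i j, add_comm (i:ℤ) (j:ℤ), abs_sub_comm]

lemma Fmat_nonzero_cond (n k i j : ℕ) (h : Fmat n k i j ≠ 0) :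
    k + 1 ≤ i + j ∧ (i:ℤ) + j ≤ 2*n - k + 1 ∧ |(i:ℤ) - j| ≤ (k:ℤ) - 1 := by
  by_contra hc
  exact h (if_neg hc)

lemma Fmat_cond_bounds (n k i j : ℕ)
    (h : k + 1 ≤ i + j ∧ (i:ℤ) + j ≤ 2*n - k + 1 ∧ |(i:ℤ) - j| ≤ (k:ℤ) - 1) :
    1 ≤ i ∧ i ≤ n ∧ 1 ≤ j ∧ j ≤ n := by
  obtain ⟨h1, h2, h3⟩ := h
  rw [abs_le] at h3
  omega

theorem main (n k : ℕ) (hn : 1 ≤ n) (hk1 : 1 ≤ k) (hk2 : k ≤ n) :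
    (∀ i j, ¬(1 ≤ i ∧ i ≤ n ∧ 1 ≤ j ∧ j ≤ n) → Fmat n k i j = 0) ∧
  (∀ i j, Fmat n k i j = -1 ∨ Fmat n k i j = 0 ∨ Fmat n k i j = 1) ∧
  (∀ i, 1 ≤ i → i ≤ n → ∑ j ∈ Icc 1 n, Fmat n k i j = 1) ∧
  (∀ j, 1 ≤ j → j ≤ n → ∑ i ∈ Icc 1 n, Fmat n k i j = 1) ∧
  (∀ i t, 1 ≤ i → i ≤ n → t ≤ n →
    (∑ j ∈ Icc 1 t, Fmat n k i j = 0 ∨ ∑ j ∈ Icc 1 t, Fmat n k i j = 1)) ∧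
  (∀ j t, 1 ≤ j → j ≤ n → t ≤ n →
    (∑ i ∈ Icc 1 t, Fmat n k i j = 0 ∨ ∑ i ∈ Icc 1 t, Fmat n k i j = 1)) := by
  have hrow : ∀ i, 1 ≤ i → i ≤ n → ∑ j ∈ Icc 1 n, Fmat n k i j = 1 := by
    intro i hi1 hi2
    obtain ⟨hL1, hLH, hHn, _, _, _⟩ := flo_hi_facts n k i hk1 hk2 hi1 hi2
    rw [Fmat_psum n k i hk1 hk2 hi1 hi2 n, if_pos ⟨by omega, Or.inl (by omega)⟩]
  have hrowp : ∀ i t, 1 ≤ i → i ≤ n →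
      (∑ j ∈ Icc 1 t, Fmat n k i j = 0 ∨ ∑ j ∈ Icc 1 t, Fmat n k i j = 1) := by
    intro i t hi1 hi2
    rw [Fmat_psum n k i hk1 hk2 hi1 hi2 t]
    split_ifs
    · exact Or.inr rfl
    · exact Or.inl rfl
  refine ⟨?_, ?_, hrow, ?_, fun i t hi1 hi2 _ => hrowp i t hi1 hi2, ?_⟩
  · intro i j h
    refine if_neg (fun hc => h (Fmat_cond_bounds n k i j hc))
  · intro i j
    unfold Fmat
    split_ifs
    · rcases Nat.even_or_odd (i + j - k - 1) with he | he
      · exact Or.inr (Or.inr he.neg_one_pow)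
      · exact Or.inl he.neg_one_pow
    · exact Or.inr (Or.inl rfl)
  · intro j hj1 hj2
    rw [Finset.sum_congr rfl (fun i _ => Fmat_symm n k i j)]
    exact hrow j hj1 hj2
  · intro j t hj1 hj2 _
    rw [Finset.sum_congr rfl (fun i _ => Fmat_symm n k i j)]
    exact hrowp j t hj1 hj2

theorem mainDense (n k : ℕ) (hn : 1 ≤ n) (hk1 : 1 ≤ k) (hk2 : k ≤ n) :
    (∀ i j₁ j₂ j₃, j₁ < j₂ → j₂ < j₃ → Fmat n k i j₁ ≠ 0 → Fmat n k i j₃ ≠ 0 → Fmat n k i j₂ ≠ 0) ∧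
    (∀ j i₁ i₂ i₃, i₁ < i₂ → i₂ < i₃ → Fmat n k i₁ j ≠ 0 → Fmat n k i₃ j ≠ 0 → Fmat n k i₂ j ≠ 0) := by
  have hrow : ∀ i j₁ j₂ j₃, j₁ < j₂ → j₂ < j₃ → Fmat n k i j₁ ≠ 0 → Fmat n k i j₃ ≠ 0 →
      Fmat n k i j₂ ≠ 0 := by
    intro i j₁ j₂ j₃ hlt1 hlt2 h1 h3
    have hc1 := Fmat_nonzero_cond n k i j₁ h1
    have hc3 := Fmat_nonzero_cond n k i j₃ h3
    obtain ⟨hi1, hi2, _, _⟩ := Fmat_cond_bounds n k i j₁ hc1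
    have hb1 := (fcond_iff n k i j₁ hk2 hi1 hi2).mp hc1
    have hb3 := (fcond_iff n k i j₃ hk2 hi1 hi2).mp hc3
    rw [Fmat_val n k i j₂ hk1 hk2 hi1 hi2 ⟨by omega, by omega⟩]
    exact pow_ne_zero _ (by norm_num)
  refine ⟨hrow, fun j i₁ i₂ i₃ h1 h2 h3 h4 => ?_⟩
  rw [Fmat_symm]
  rw [Fmat_symm] at h3 h4
  exact hrow j i₁ i₂ i₃ h1 h2 h3 h4

theorem mainProper (n k : ℕ) (hn : 1 ≤ n) (hk1 : 1 ≤ k) (hk2 : k ≤ n) :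
    (∃ i j, Fmat n k i j = -1) ↔ 3 ≤ n ∧ 2 ≤ k ∧ k ≤ n - 1 := by
  constructor
  · rintro ⟨i, j, h⟩
    have hnz : Fmat n k i j ≠ 0 := by rw [h]; norm_num
    have hc := Fmat_nonzero_cond n k i j hnz
    have hodd : (i + j - k - 1) % 2 = 1 := by
      rcases Nat.even_or_odd (i + j - k - 1) with he | he
      · exfalso
        have : Fmat n k i j = 1 := by unfold Fmat; rw [if_pos hc, he.neg_one_pow]
        rw [this] at h; norm_num at h
      · exact Nat.odd_iff.mp he
    obtain ⟨hc1, hc2, hc3⟩ := hc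
    rw [abs_le] at hc3
    omega
  · rintro ⟨hn3, hk2', hkn⟩
    refine ⟨2, k, ?_⟩
    unfold Fmat
    rw [if_pos ⟨by omega, by push_cast; omega, by rw [abs_le]; push_cast; omega⟩,
      show 2 + k - k - 1 = 1 by omega]
    norm_num

/-- For every `n ≥ 1` and `1 ≤ k ≤ n`, the matrix `F_n^k` is a dense
alternating sign matrix, and it is a proper ASM iff `n ≥ 3` and `2 ≤ k ≤ n − 1`. -/
theorem Fmat_isDenseASM_and_proper_iff (n k : ℕ) (hn : 1 ≤ n) (hk1 : 1 ≤ k) (hk2 : k ≤ n) :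
    IsASM n (Fmat n k) ∧ IsDense (Fmat n k) ∧
      (IsProper (Fmat n k) ↔ 3 ≤ n ∧ 2 ≤ k ∧ k ≤ n - 1) := by
  exact ⟨main n k hn hk1 hk2, mainDense n k hn hk1 hk2, mainProper n k hn hk1 hk2⟩
end

section
/- For every n ≥ 2 and 2 ≤ k ≤ n, every entry of the matrix F_n^{k−1} + F_n^k is equal to 0 or 1; in particular F_n^{k−1} + F_n^k is a nonnegative matrix. -/
open Finset

/-- For every `n ≥ 2` and `2 ≤ k ≤ n`, every entry of `F_n^{k−1} + F_n^k`
is `0` or `1`; in particular the sum is a nonnegative matrix. -/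
theorem Fmat_add_prev_zero_one (n k : ℕ) (hn : 2 ≤ n) (hk1 : 2 ≤ k) (hk2 : k ≤ n) :
    ∀ i j, Fmat n (k - 1) i j + Fmat n k i j = 0 ∨ Fmat n (k - 1) i j + Fmat n k i j = 1 := by
  intro i j
  have hk : ((k - 1 : ℕ) : ℤ) = (k : ℤ) - 1 := by omega
  unfold Fmat
  by_cases h1 : (k - 1) + 1 ≤ i + j ∧ (i : ℤ) + j ≤ 2 * n - ((k - 1 : ℕ) : ℤ) + 1 ∧
      |(i : ℤ) - j| ≤ ((k - 1 : ℕ) : ℤ) - 1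
  · by_cases h2 : k + 1 ≤ i + j ∧ (i : ℤ) + j ≤ 2 * n - k + 1 ∧ |(i : ℤ) - j| ≤ (k : ℤ) - 1
    · rw [if_pos h1, if_pos h2]
      left
      have he : i + j - (k - 1) - 1 = (i + j - k - 1) + 1 := by omega
      rw [he, pow_succ]
      ring
    · rw [if_pos h1, if_neg h2]
      right
      obtain ⟨ha, hb, hc⟩ := h1
      rw [hk] at hc
      push_neg at h2
      rcases abs_cases ((i : ℤ) - j) with ⟨habs, _⟩ | ⟨habs, _⟩ <;> rw [habs] at hc <;>
      · have hev : (i + j - (k - 1) - 1) % 2 = 0 := by omega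
        rw [(Nat.even_iff.mpr hev).neg_one_pow, add_zero]
  · by_cases h2 : k + 1 ≤ i + j ∧ (i : ℤ) + j ≤ 2 * n - k + 1 ∧ |(i : ℤ) - j| ≤ (k : ℤ) - 1
    · rw [if_neg h1, if_pos h2]
      right
      obtain ⟨ha, hb, hc⟩ := h2
      push_neg at h1
      rw [hk] at h1
      rcases abs_cases ((i : ℤ) - j) with ⟨habs, _⟩ | ⟨habs, _⟩ <;> rw [habs] at hc h1 <;>
      · have h1' := h1 (by omega) (by omega)
        have hev : (i + j - k - 1) % 2 = 0 := by omega
        rw [(Nat.even_iff.mpr hev).neg_one_pow, zero_add]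
    · rw [if_neg h1, if_neg h2]
      left
      ring
end

section
/- For every n ≥ 2 and 2 ≤ k ≤ n, there exist n×n permutation matrices P and P' such that F_n^{k−1} + F_n^k = P + P'. -/
open Finset

def sig0 (d i : ℕ) : ℕ := if d < i then i - d else d + 1 - i
def tau0 (n d i : ℕ) : ℕ := if i + d ≤ n then i + d else 2*n + 1 - (i + d)
def sigp (n d i : ℕ) : ℕ := if i % 2 = 0 then tau0 n d i else sig0 d i
def taup (n d i : ℕ) : ℕ := if i % 2 = 0 then sig0 d i else tau0 n d i
def rhop (n d j : ℕ) : ℕ := if j % 2 = d % 2 then sig0 d j else tau0 n d j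
def rhop' (n d j : ℕ) : ℕ := if j % 2 = d % 2 then tau0 n d j else sig0 d j

lemma Fmat_eq' (n k i j : ℕ) :
    Fmat n k i j =
      if k + 1 ≤ i + j ∧ i + j + k ≤ 2*n + 1 ∧ i + 1 ≤ j + k ∧ j + 1 ≤ i + k
      then (if (i + j - k - 1) % 2 = 0 then (1:ℝ) else -1) else 0 := by
  unfold Fmat
  have hcond : (k + 1 ≤ i + j ∧ (i : ℤ) + j ≤ 2 * n - k + 1 ∧ |(i : ℤ) - j| ≤ (k : ℤ) - 1)
      ↔ (k + 1 ≤ i + j ∧ i + j + k ≤ 2*n + 1 ∧ i + 1 ≤ j + k ∧ j + 1 ≤ i + k) := by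
    rw [abs_le]
    constructor
    · rintro ⟨h1, h2, h3, h4⟩; omega
    · rintro ⟨h1, h2, h3, h4⟩
      exact ⟨h1, by omega, by omega, by omega⟩
  simp only [hcond]
  split_ifs with h1 h2
  · exact Even.neg_one_pow (Nat.even_iff.mpr h2)
  · exact Odd.neg_one_pow (Nat.odd_iff.mpr (by omega))
  · rfl

lemma isPermMatrix_of_inv (n : ℕ) (f g : ℕ → ℕ)
    (hf : ∀ i, 1 ≤ i → i ≤ n → 1 ≤ f i ∧ f i ≤ n)
    (hg : ∀ j, 1 ≤ j → j ≤ n → 1 ≤ g j ∧ g j ≤ n)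
    (hfg : ∀ i j, 1 ≤ i → i ≤ n → 1 ≤ j → j ≤ n → (j = f i ↔ i = g j)) :
    IsPermMatrix n (fun i j => if 1 ≤ i ∧ i ≤ n ∧ 1 ≤ j ∧ j ≤ n ∧ j = f i then 1 else 0) := by
  refine ⟨?_, ?_, ?_, ?_⟩
  · intro i j h
    dsimp only
    rw [if_neg]; tauto
  · intro i j
    dsimp only
    split_ifs <;> simp
  · intro i h1 h2
    have hrw : ∀ j ∈ Icc 1 n,
        (if 1 ≤ i ∧ i ≤ n ∧ 1 ≤ j ∧ j ≤ n ∧ j = f i then (1:ℝ) else 0)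
          = if f i = j then 1 else 0 := by
      intro j hj
      simp only [mem_Icc] at hj
      refine if_congr ⟨fun h => h.2.2.2.2.symm, fun h => ⟨h1, h2, hj.1, hj.2, h.symm⟩⟩ rfl rfl
    rw [Finset.sum_congr rfl hrw, Finset.sum_ite_eq, if_pos]
    simp only [mem_Icc]
    exact hf i h1 h2
  · intro j h1 h2
    have hrw : ∀ i ∈ Icc 1 n,
        (if 1 ≤ i ∧ i ≤ n ∧ 1 ≤ j ∧ j ≤ n ∧ j = f i then (1:ℝ) else 0)
          = if g j = i then 1 else 0 := by
      intro i hi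
      simp only [mem_Icc] at hi
      refine if_congr ⟨fun h => ((hfg i j hi.1 hi.2 h1 h2).mp h.2.2.2.2).symm,
        fun h => ⟨hi.1, hi.2, h1, h2, (hfg i j hi.1 hi.2 h1 h2).mpr h.symm⟩⟩ rfl rfl
    rw [Finset.sum_congr rfl hrw, Finset.sum_ite_eq, if_pos]
    simp only [mem_Icc]
    exact hg j h1 h2

lemma sigp_inv (n d : ℕ) (hd1 : 1 ≤ d) (hdn : d + 1 ≤ n) :
    ∀ i j, 1 ≤ i → i ≤ n → 1 ≤ j → j ≤ n → (j = sigp n d i ↔ i = rhop n d j) := by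
  intro i j hi1 hi2 hj1 hj2
  unfold sigp rhop sig0 tau0
  split_ifs <;> omega

lemma taup_inv (n d : ℕ) (hd1 : 1 ≤ d) (hdn : d + 1 ≤ n) :
    ∀ i j, 1 ≤ i → i ≤ n → 1 ≤ j → j ≤ n → (j = taup n d i ↔ i = rhop' n d j) := by
  intro i j hi1 hi2 hj1 hj2
  unfold taup rhop' sig0 tau0
  split_ifs <;> omega

lemma sigp_range (n d : ℕ) (hd1 : 1 ≤ d) (hdn : d + 1 ≤ n) :
    ∀ i, 1 ≤ i → i ≤ n → 1 ≤ sigp n d i ∧ sigp n d i ≤ n := by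
  intro i h1 h2; unfold sigp sig0 tau0; split_ifs <;> omega

lemma taup_range (n d : ℕ) (hd1 : 1 ≤ d) (hdn : d + 1 ≤ n) :
    ∀ i, 1 ≤ i → i ≤ n → 1 ≤ taup n d i ∧ taup n d i ≤ n := by
  intro i h1 h2; unfold taup sig0 tau0; split_ifs <;> omega

lemma rhop_range (n d : ℕ) (hd1 : 1 ≤ d) (hdn : d + 1 ≤ n) :
    ∀ i, 1 ≤ i → i ≤ n → 1 ≤ rhop n d i ∧ rhop n d i ≤ n := by
  intro i h1 h2; unfold rhop sig0 tau0; split_ifs <;> omega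

lemma rhop'_range (n d : ℕ) (hd1 : 1 ≤ d) (hdn : d + 1 ≤ n) :
    ∀ i, 1 ≤ i → i ≤ n → 1 ≤ rhop' n d i ∧ rhop' n d i ≤ n := by
  intro i h1 h2; unfold rhop' sig0 tau0; split_ifs <;> omega


set_option maxHeartbeats 4000000 in
/-- For every `n ≥ 2` and `2 ≤ k ≤ n`, there exist `n×n` permutation
matrices `P` and `P'` such that `F_n^{k−1} + F_n^k = P + P'`. -/
theorem Fmat_add_prev_eq_sum_perm (n k : ℕ) (hn : 2 ≤ n) (hk1 : 2 ≤ k) (hk2 : k ≤ n) :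
    ∃ P P' : ℕ → ℕ → ℝ, IsPermMatrix n P ∧ IsPermMatrix n P' ∧
      ∀ i j, Fmat n (k - 1) i j + Fmat n k i j = P i j + P' i j := by
  obtain ⟨d, rfl⟩ : ∃ d, k = d + 1 := ⟨k - 1, by omega⟩
  have hd1 : 1 ≤ d := by omega
  have hdn : d + 1 ≤ n := hk2
  refine ⟨fun i j => if 1 ≤ i ∧ i ≤ n ∧ 1 ≤ j ∧ j ≤ n ∧ j = sigp n d i then 1 else 0,
    fun i j => if 1 ≤ i ∧ i ≤ n ∧ 1 ≤ j ∧ j ≤ n ∧ j = taup n d i then 1 else 0,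
    isPermMatrix_of_inv n _ _ (sigp_range n d hd1 hdn) (rhop_range n d hd1 hdn)
      (sigp_inv n d hd1 hdn),
    isPermMatrix_of_inv n _ _ (taup_range n d hd1 hdn) (rhop'_range n d hd1 hdn)
      (taup_inv n d hd1 hdn), ?_⟩
  intro i j
  have hdd : d + 1 - 1 = d := rfl
  rw [hdd, Fmat_eq' n d i j, Fmat_eq' n (d+1) i j]
  simp only []
  unfold sigp taup sig0 tau0
  split_ifs <;> first | (exfalso; omega) | norm_num
end
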